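/- arXiv:0809.0063 — 16 statements merged into one kernel-verified Lean document; each statement's English description precedes it below -/
import Mathlib

section
/- Let p ≥ 1 and q ≥ 1 be integers, let r̃ ≥ 0 be an integer, and for an integer i ≥ 0 define u_i = ⌊r̃/q^i⌋ − p·⌊⌊r̃/p⌋/q^i⌋. Then 0 ≤ u_i < p and u_i ≡ ⌊r̃/q^i⌋ (mod p); that is, u_i is exactly the remainder of ⌊r̃/q^i⌋ upon division by p. -/
theorem Int.ediv_ediv_comm_of_nonneg (a : ℤ) {b c : ℤ} (hb : 0 ≤ b) (hc : 0 ≤ c) :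
    a / b / c = a / c / b := by
  rw [Int.ediv_ediv_of_nonneg hb, Int.ediv_ediv_of_nonneg hc, mul_comm]

theorem redq_compression_correct_general (p q r : ℤ) (hp : 1 ≤ p) (hq : 1 ≤ q)
    (i : ℕ) :
    0 ≤ r / q ^ i - p * ((r / p) / q ^ i) ∧
    r / q ^ i - p * ((r / p) / q ^ i) < p ∧
    r / q ^ i - p * ((r / p) / q ^ i) = (r / q ^ i) % p := by
  have hp_pos : 0 < p := hp
  have hu : r / q ^ i - p * ((r / p) / q ^ i) = (r / q ^ i) % p := by
    rw [Int.ediv_ediv_comm_of_nonneg r hp_pos.le (pow_nonneg (by omega) i), Int.emod_def]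
  rw [hu]
  exact ⟨Int.emod_nonneg _ hp_pos.ne', Int.emod_lt_of_pos _ hp_pos, rfl⟩

/-- Correctness of the compression phase of the REDQ algorithm:
for integers `p ≥ 1`, `q ≥ 1`, `r̃ ≥ 0` and `i ≥ 0`, the quantity
`u_i = ⌊r̃/q^i⌋ − p·⌊⌊r̃/p⌋/q^i⌋` satisfies `0 ≤ u_i < p` and is exactly the
remainder of `⌊r̃/q^i⌋` upon division by `p`. -/
theorem redq_compression_correct (p q r : ℤ) (hp : 1 ≤ p) (hq : 1 ≤ q)
    (hr : 0 ≤ r) (i : ℕ) :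
    0 ≤ r / q ^ i - p * ((r / p) / q ^ i) ∧
    r / q ^ i - p * ((r / p) / q ^ i) < p ∧
    r / q ^ i - p * ((r / p) / q ^ i) = (r / q ^ i) % p :=
  redq_compression_correct_general p q r hp hq i
end

section
/- Let p ≥ 1, q ≥ 1, d ≥ 0 be integers and let μ̃_0, …, μ̃_d be nonnegative integers with μ̃_j < q for all j. Set r̃ = Σ_{j=0}^{d} μ̃_j q^j and define u_i = ⌊r̃/q^i⌋ − p·⌊⌊r̃/p⌋/q^i⌋ for 0 ≤ i ≤ d. Define μ_d = u_d mod p and μ_i = (u_i − q·u_{i+1}) mod p for 0 ≤ i ≤ d−1. Then 0 ≤ μ_i < p and μ_i ≡ μ̃_i (mod p) for every i = 0, …, d. -/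
/-!
Since `0 ≤ μ̃_j < q`, `r̃ / q^i` is the base-`q` number with digits `μ̃_i, …, μ̃_d`, so
`r̃ / q^i = μ̃_i + q · (r̃ / q^(i+1))` for `i < d` and `r̃ / q^d = μ̃_d`. The compressed values
satisfy `u_i ≡ r̃ / q^i (mod p)`, hence `u_i − q u_{i+1} ≡ μ̃_i` and `u_d ≡ μ̃_d`; reducing mod `p`
puts `μ_i` in `[0, p)`.
-/

open Finset

section BaseExpansion

variable {q : ℤ} {μ : ℕ → ℤ}

theorem sum_digit_mul_pow_nonneg_and_lt {n : ℕ} (h0 : ∀ j < n, 0 ≤ μ j)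
    (hlt : ∀ j < n, μ j < q) :
    0 ≤ ∑ j ∈ range n, μ j * q ^ j ∧ ∑ j ∈ range n, μ j * q ^ j < q ^ n := by
  induction n with
  | zero => simp
  | succ n ih =>
    obtain ⟨hlo, hhi⟩ := ih (fun j hj => h0 j (by omega)) (fun j hj => hlt j (by omega))
    have hqn : 0 ≤ q ^ n := hlo.trans hhi.le
    have hμ : μ n + 1 ≤ q := hlt n n.lt_succ_self
    rw [sum_range_succ]
    refine ⟨add_nonneg hlo (mul_nonneg (h0 n n.lt_succ_self) hqn), ?_⟩
    calc ∑ j ∈ range n, μ j * q ^ j + μ n * q ^ n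
        < (μ n + 1) * q ^ n := by linarith
      _ ≤ q * q ^ n := mul_le_mul_of_nonneg_right hμ hqn
      _ = q ^ (n + 1) := (pow_succ' q n).symm

theorem sum_digit_mul_pow_ediv_pow (hq : 0 < q) {n : ℕ} (h0 : ∀ j < n, 0 ≤ μ j)
    (hlt : ∀ j < n, μ j < q) {i : ℕ} (hi : i ≤ n) :
    (∑ j ∈ range n, μ j * q ^ j) / q ^ i = ∑ j ∈ range (n - i), μ (i + j) * q ^ j := by
  obtain ⟨k, rfl⟩ := Nat.exists_eq_add_of_le hi
  have hsplit : ∑ j ∈ range (i + k), μ j * q ^ j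
      = ∑ j ∈ range i, μ j * q ^ j + q ^ i * ∑ j ∈ range k, μ (i + j) * q ^ j := by
    rw [sum_range_add, mul_sum]
    congr 1
    exact sum_congr rfl fun j _ => by ring
  obtain ⟨hlo, hhi⟩ := sum_digit_mul_pow_nonneg_and_lt (n := i)
    (fun j hj => h0 j (by omega)) (fun j hj => hlt j (by omega))
  rw [hsplit, Int.add_mul_ediv_left _ _ (pow_pos hq i).ne', Int.ediv_eq_zero_of_lt hlo hhi,
    zero_add, Nat.add_sub_cancel_left]

theorem sum_digit_mul_pow_ediv_pow_eq_add (hq : 0 < q) {n : ℕ} (h0 : ∀ j < n, 0 ≤ μ j)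
    (hlt : ∀ j < n, μ j < q) {i : ℕ} (hi : i < n) :
    (∑ j ∈ range n, μ j * q ^ j) / q ^ i
      = μ i + q * ((∑ j ∈ range n, μ j * q ^ j) / q ^ (i + 1)) := by
  rw [sum_digit_mul_pow_ediv_pow hq h0 hlt hi.le, sum_digit_mul_pow_ediv_pow hq h0 hlt hi,
    show n - i = n - (i + 1) + 1 by omega, sum_range_succ', mul_sum, add_comm]
  congr 1
  · simp
  · exact sum_congr rfl fun j _ => by rw [show i + (j + 1) = i + 1 + j by omega]; ring

end BaseExpansion

open Finset in
/-- Full correctness of the REDQ algorithm (compression followed by correction):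
for `r̃ = Σ_{j=0}^d μ̃_j q^j` with base-`q` digits `μ̃_j`, setting
`u_i = ⌊r̃/q^i⌋ − p·⌊⌊r̃/p⌋/q^i⌋`, `μ_d = u_d mod p` and
`μ_i = (u_i − q·u_{i+1}) mod p`, one has `0 ≤ μ_i < p` and `μ_i ≡ μ̃_i (mod p)`
for every `i = 0, …, d`. -/
theorem redq_correct (p q : ℤ) (hp : 1 ≤ p) (hq : 1 ≤ q)
    (d : ℕ) (μt : ℕ → ℤ) (hμt0 : ∀ j ≤ d, 0 ≤ μt j)
    (hμtq : ∀ j ≤ d, μt j < q)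
    (r : ℤ) (hr : r = ∑ j ∈ range (d + 1), μt j * q ^ j)
    (u : ℕ → ℤ) (hu : ∀ i ≤ d, u i = r / q ^ i - p * ((r / p) / q ^ i))
    (μ : ℕ → ℤ) (hμd : μ d = u d % p)
    (hμ : ∀ i < d, μ i = (u i - q * u (i + 1)) % p) :
    ∀ i ≤ d, 0 ≤ μ i ∧ μ i < p ∧ μ i ≡ μt i [ZMOD p] := by
  have h0 : ∀ j < d + 1, 0 ≤ μt j := fun j hj => hμt0 j (by omega)
  have hlt : ∀ j < d + 1, μt j < q := fun j hj => hμtq j (by omega)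
  have hu_modEq : ∀ i ≤ d, u i ≡ r / q ^ i [ZMOD p] := fun i hi => by
    rw [hu i hi, sub_eq_add_neg, ← mul_neg]
    exact Int.modEq_add_fac_self
  intro i hi
  obtain ⟨x, hμx, hx⟩ : ∃ x, μ i = x % p ∧ x ≡ μt i [ZMOD p] := by
    rcases hi.lt_or_eq with hid | rfl
    · refine ⟨_, hμ i hid, ?_⟩
      calc u i - q * u (i + 1) ≡ r / q ^ i - q * (r / q ^ (i + 1)) [ZMOD p] :=
            (hu_modEq i hi).sub ((hu_modEq (i + 1) hid).mul_left q)
        _ = μt i := by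
          rw [hr, sum_digit_mul_pow_ediv_pow_eq_add hq h0 hlt (by omega)]
          ring
    · refine ⟨_, hμd, (hu_modEq i le_rfl).trans ?_⟩
      rw [hr, sum_digit_mul_pow_ediv_pow hq h0 hlt (by omega)]
      simp
  rw [hμx]
  exact ⟨Int.emod_nonneg _ (by omega), Int.emod_lt_of_pos _ (by omega),
    (Int.mod_modEq _ _).trans hx⟩
end

section
/- Let p ≥ 2, k ≥ 1, n ≥ 1 and q be integers with q > n·k·(p−1)². For 1 ≤ l ≤ n let a_{l,0},…,a_{l,k−1} and b_{l,0},…,b_{l,k−1} be integers with 0 ≤ a_{l,i} ≤ p−1 and 0 ≤ b_{l,i} ≤ p−1, and set ã_l = Σ_{i=0}^{k−1} a_{l,i} q^i and b̃_l = Σ_{i=0}^{k−1} b_{l,i} q^i. Define r̃ = Σ_{l=1}^{n} ã_l · b̃_l and, for 0 ≤ j ≤ 2k−2, c_j = Σ_{l=1}^{n} Σ_{i=0}^{j} a_{l,i} b_{l,j−i} (with a_{l,i} = b_{l,i} = 0 for i ≥ k). Then r̃ = Σ_{j=0}^{2k−2} c_j q^j with 0 ≤ c_j < q for every j, so that c_j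 = ⌊r̃/q^j⌋ mod q; moreover r̃ < q^{2k−1}. Consequently, the residues c_j mod p are the coefficients of the dot product Σ_l (Σ_i a_{l,i} X^i)(Σ_i b_{l,i} X^i) computed in (ℤ/pℤ)[X]. -/
/-!
Over any semiring, `Σ_l A_l B_l = Σ_{j < 2k-1} c_j X^j` for `A_l = Σ_i a_{l,i} X^i`,
`B_l = Σ_i b_{l,i} X^i`. Evaluating this identity over `ℕ` at `q` writes `r̃` in base `q`
with "digits" `c_j`; each `c_j` is a sum of at most `n·k` products bounded by `(p-1)²`, so
`c_j < q`, these are genuine base-`q` digits and can be read off by `⌊r̃/q^j⌋ mod q`.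
Reading the same identity over `ZMod p` gives the last claim.
-/

open Finset Polynomial

namespace Nat

theorem sum_range_mul_pow_lt_pow {q m : ℕ} {f : ℕ → ℕ} (hf : ∀ j < m, f j < q) :
    ∑ j ∈ range m, f j * q ^ j < q ^ m := by
  induction m with
  | zero => simp
  | succ m ih =>
    have hlow := ih fun j hj => hf j (by omega)
    have htop : f m + 1 ≤ q := hf m (by omega)
    calc ∑ j ∈ range (m + 1), f j * q ^ j
        = ∑ j ∈ range m, f j * q ^ j + f m * q ^ m := sum_range_succ _ _
      _ < (f m + 1) * q ^ m := by linarith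
      _ ≤ q ^ (m + 1) := by rw [pow_succ']; exact Nat.mul_le_mul_right _ htop

theorem sum_range_succ_mul_pow (q m : ℕ) (f : ℕ → ℕ) :
    ∑ j ∈ range (m + 1), f j * q ^ j = f 0 + q * ∑ j ∈ range m, f (j + 1) * q ^ j := by
  rw [sum_range_succ', mul_sum]
  simp only [pow_succ', pow_zero, mul_one, mul_left_comm _ q]
  exact add_comm _ _

theorem sum_range_mul_pow_div_pow_mod {q m i : ℕ} {f : ℕ → ℕ} (hf : ∀ j < m, f j < q)
    (hi : i < m) : (∑ j ∈ range m, f j * q ^ j) / q ^ i % q = f i := by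
  obtain ⟨m, rfl⟩ : ∃ m', m = m' + 1 := ⟨m - 1, by omega⟩
  have hf0 : f 0 < q := hf 0 m.succ_pos
  rw [sum_range_succ_mul_pow]
  induction i generalizing f m with
  | zero => simp [Nat.mod_eq_of_lt hf0]
  | succ i ih =>
    rw [pow_succ', ← Nat.div_div_eq_div_mul, Nat.add_mul_div_left _ _ (by omega),
      Nat.div_eq_of_lt hf0, zero_add]
    obtain ⟨m, rfl⟩ : ∃ m', m = m' + 1 := ⟨m - 1, by omega⟩
    rw [sum_range_succ_mul_pow]
    exact ih _ (fun j hj => hf (j + 1) (by omega)) (by omega) (hf 1 (by omega))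

end Nat

section

variable {R : Type*} [Semiring R]

def dotConvCoeff (a b : ℕ → ℕ → R) (n j : ℕ) : R :=
  ∑ l ∈ range n, ∑ i ∈ range (j + 1), a l i * b l (j - i)

theorem coeff_sum_range_C_mul_X_pow {f : ℕ → R} {k : ℕ} (hf : ∀ i, k ≤ i → f i = 0) (m : ℕ) :
    (∑ i ∈ range k, C (f i) * X ^ i).coeff m = f m := by
  simp only [finsetSum_coeff, coeff_C_mul_X_pow, sum_ite_eq, mem_range]
  split_ifs with hm
  · rfl
  · exact (hf m (not_lt.mp hm)).symm

variable {a b : ℕ → ℕ → R} {n k : ℕ}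
  (ha : ∀ l < n, ∀ i, k ≤ i → a l i = 0) (hb : ∀ l < n, ∀ i, k ≤ i → b l i = 0)
include ha hb

theorem coeff_sum_mul_eq_dotConvCoeff (j : ℕ) :
    (∑ l ∈ range n, (∑ i ∈ range k, C (a l i) * X ^ i) *
      (∑ i ∈ range k, C (b l i) * X ^ i)).coeff j = dotConvCoeff a b n j := by
  rw [dotConvCoeff, finsetSum_coeff]
  refine sum_congr rfl fun l hl => ?_
  rw [coeff_mul, Nat.sum_antidiagonal_eq_sum_range_succ_mk]
  refine sum_congr rfl fun i _ => ?_
  rw [coeff_sum_range_C_mul_X_pow (ha l (mem_range.mp hl)),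
    coeff_sum_range_C_mul_X_pow (hb l (mem_range.mp hl))]

theorem dotConvCoeff_eq_zero {j : ℕ} (hj : 2 * k - 1 ≤ j) : dotConvCoeff a b n j = 0 := by
  refine sum_eq_zero fun l hl => sum_eq_zero fun i hi => ?_
  rcases lt_or_ge i k with hik | hik
  · rw [hb l (mem_range.mp hl) (j - i) (by omega), mul_zero]
  · rw [ha l (mem_range.mp hl) i hik, zero_mul]

theorem sum_mul_eq_sum_range_dotConvCoeff :
    ∑ l ∈ range n, (∑ i ∈ range k, C (a l i) * X ^ i) * (∑ i ∈ range k, C (b l i) * X ^ i) =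
      ∑ j ∈ range (2 * k - 1), C (dotConvCoeff a b n j) * X ^ j := by
  ext j
  rw [coeff_sum_mul_eq_dotConvCoeff ha hb,
    coeff_sum_range_C_mul_X_pow fun _ => dotConvCoeff_eq_zero ha hb]

end

theorem dotConvCoeff_le {a b : ℕ → ℕ → ℕ} {n k s t : ℕ}
    (ha0 : ∀ l < n, ∀ i, k ≤ i → a l i = 0) (ha : ∀ l < n, ∀ i, a l i ≤ s) (hb : ∀ l < n, ∀ i, b l i ≤ t) (j : ℕ) :
    dotConvCoeff a b n j ≤ n * k * (s * t) := by
  have hinner : ∀ l < n, ∑ i ∈ range (j + 1), a l i * b l (j - i) ≤ k * (s * t) := by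
    intro l hl
    calc ∑ i ∈ range (j + 1), a l i * b l (j - i)
        ≤ ∑ i ∈ range k, a l i * b l (j - i) := by
          refine sum_le_sum_of_ne_zero fun i _ hne => mem_range.mpr ?_
          by_contra! hik
          exact hne (by rw [ha0 l hl i hik, zero_mul])
      _ ≤ ∑ _i ∈ range k, s * t := sum_le_sum fun i _ => Nat.mul_le_mul (ha l hl i) (hb l hl _)
      _ = k * (s * t) := by rw [sum_const, card_range, smul_eq_mul]
  calc dotConvCoeff a b n j ≤ ∑ _l ∈ range n, k * (s * t) :=
        sum_le_sum fun l hl => hinner l (mem_range.mp hl)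
    _ = n * k * (s * t) := by rw [sum_const, card_range, smul_eq_mul, mul_assoc]

theorem dqt_dot_product_correct_general (p k n q : ℕ) (hq : n * k * (p - 1) ^ 2 < q)
    (a b : ℕ → ℕ → ℕ)
    (ha : ∀ l < n, ∀ i, a l i ≤ p - 1) (hb : ∀ l < n, ∀ i, b l i ≤ p - 1)
    (ha0 : ∀ l < n, ∀ i, k ≤ i → a l i = 0)
    (hb0 : ∀ l < n, ∀ i, k ≤ i → b l i = 0)
    (r : ℕ)
    (hr : r = ∑ l ∈ range n,
      (∑ i ∈ range k, a l i * q ^ i) * (∑ i ∈ range k, b l i * q ^ i))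
    (c : ℕ → ℕ)
    (hc : ∀ j, c j = ∑ l ∈ range n, ∑ i ∈ range (j + 1), a l i * b l (j - i)) :
    r = ∑ j ∈ range (2 * k - 1), c j * q ^ j ∧
    (∀ j < 2 * k - 1, c j < q) ∧
    (∀ j < 2 * k - 1, c j = r / q ^ j % q) ∧
    r < q ^ (2 * k - 1) ∧
    (∑ l ∈ range n,
        (∑ i ∈ range k, C ((a l i : ZMod p)) * X ^ i) *
          (∑ i ∈ range k, C ((b l i : ZMod p)) * X ^ i)) =
      ∑ j ∈ range (2 * k - 1), C ((c j : ZMod p)) * X ^ j := by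
  have hpoly (R : Type) [Semiring R] :
      ∑ l ∈ range n, (∑ i ∈ range k, C (a l i : R) * X ^ i) *
        (∑ i ∈ range k, C (b l i : R) * X ^ i) =
      ∑ j ∈ range (2 * k - 1), C (c j : R) * X ^ j := by
    simp only [hc, Nat.cast_sum, Nat.cast_mul]
    exact sum_mul_eq_sum_range_dotConvCoeff (fun l hl i hi => by simp [ha0 l hl i hi])
      (fun l hl i hi => by simp [hb0 l hl i hi])
  have hdigits (j : ℕ) : c j < q :=
    (hc j).trans_le (dotConvCoeff_le ha0 ha hb j) |>.trans_lt (by rwa [← sq])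
  have hexpand : r = ∑ j ∈ range (2 * k - 1), c j * q ^ j := by
    simpa [hr, eval_finsetSum] using congrArg (eval q) (hpoly ℕ)
  refine ⟨hexpand, fun j _ => hdigits j, fun j hj => ?_, ?_, hpoly (ZMod p)⟩
  · rw [hexpand, Nat.sum_range_mul_pow_div_pow_mod (fun i _ => hdigits i) hj]
  · exact hexpand ▸ Nat.sum_range_mul_pow_lt_pow fun i _ => hdigits i

open Finset Polynomial in
/-- Kronecker substitution (DQT) for a dot product of polynomial vectors:
if `q > n·k·(p−1)²` and the coefficients lie in `{0,…,p−1}`, then the base-`q`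
digits of the integer dot product `r̃ = Σ_l ã_l b̃_l` are exactly the
coefficients `c_j` of the unreduced polynomial dot product, `r̃ < q^{2k−1}`,
and the `c_j mod p` are the coefficients of the dot product in `(ℤ/pℤ)[X]`. -/
theorem dqt_dot_product_correct (p k n q : ℕ) (hp : 2 ≤ p) (hk : 1 ≤ k)
    (hn : 1 ≤ n) (hq : n * k * (p - 1) ^ 2 < q)
    (a b : ℕ → ℕ → ℕ)
    (ha : ∀ l < n, ∀ i, a l i ≤ p - 1) (hb : ∀ l < n, ∀ i, b l i ≤ p - 1)
    (ha0 : ∀ l < n, ∀ i, k ≤ i → a l i = 0)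
    (hb0 : ∀ l < n, ∀ i, k ≤ i → b l i = 0)
    (r : ℕ)
    (hr : r = ∑ l ∈ range n,
      (∑ i ∈ range k, a l i * q ^ i) * (∑ i ∈ range k, b l i * q ^ i))
    (c : ℕ → ℕ)
    (hc : ∀ j, c j = ∑ l ∈ range n, ∑ i ∈ range (j + 1), a l i * b l (j - i)) :
    r = ∑ j ∈ range (2 * k - 1), c j * q ^ j ∧
    (∀ j < 2 * k - 1, c j < q) ∧
    (∀ j < 2 * k - 1, c j = r / q ^ j % q) ∧
    r < q ^ (2 * k - 1) ∧
    (∑ l ∈ range n,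
        (∑ i ∈ range k, C ((a l i : ZMod p)) * X ^ i) *
          (∑ i ∈ range k, C ((b l i : ZMod p)) * X ^ i)) =
      ∑ j ∈ range (2 * k - 1), C ((c j : ZMod p)) * X ^ j :=
  dqt_dot_product_correct_general p k n q hq a b ha hb ha0 hb0 r hr c hc
end

section
/- Let p ≥ 1, q ≥ 2, k ≥ 1 be integers and let r̃ be an integer with 0 ≤ r̃ < q^k. For 0 ≤ i ≤ k−1 define u_i = ⌊r̃/q^i⌋ − p·⌊⌊r̃/p⌋/q^i⌋. Then 0 ≤ u_i ≤ ⌊r̃/q^i⌋ < q^{k−i}; in particular both ⌊r̃/q^i⌋ and p·⌊⌊r̃/p⌋/q^i⌋ as well as their difference fit in (k−i)·log₂(q) bits. -/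
/-! Floor divisions by nonnegative integers commute, `⌊⌊r/p⌋/c⌋ = ⌊⌊r/c⌋/p⌋`, so
`u_i = ⌊r/q^i⌋ - p⌊⌊r/q^i⌋/p⌋` is just `⌊r/q^i⌋ mod p`, which lies between `0` and `⌊r/q^i⌋`;
and `⌊r/q^i⌋ < q^(k-i)` because `r < q^k = q^(k-i) q^i`. -/

namespace Int

theorem ediv_ediv_comm (r : ℤ) {p c : ℤ} (hp : 0 ≤ p) (hc : 0 ≤ c) :
    r / p / c = r / c / p := by
  rw [ediv_ediv_of_nonneg hp, ediv_ediv_of_nonneg hc, mul_comm]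

theorem ediv_sub_mul_ediv_ediv_eq_emod (r : ℤ) {p c : ℤ} (hp : 0 ≤ p) (hc : 0 ≤ c) :
    r / c - p * (r / p / c) = r / c % p := by
  rw [emod_def, ediv_ediv_comm r hp hc]

theorem emod_le_self_of_nonneg {a b : ℤ} (ha : 0 ≤ a) (hb : 0 ≤ b) : a % b ≤ a := by
  rw [emod_def, sub_le_self_iff]
  exact mul_nonneg hb (ediv_nonneg ha hb)

theorem ediv_pow_lt_pow_sub {r q : ℤ} {k i : ℕ} (hq : 0 < q) (hi : i ≤ k) (hr : r < q ^ k) :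
    r / q ^ i < q ^ (k - i) :=
  Int.ediv_lt_of_lt_mul (pow_pos hq i) (by rwa [← pow_add, Nat.sub_add_cancel hi])

end Int

theorem redq_compression_no_overflow_general (p q : ℤ) (hp : 1 ≤ p) (hq : 2 ≤ q)
    (k : ℕ) (r : ℤ) (hr0 : 0 ≤ r) (hrk : r < q ^ k)
    (i : ℕ) (hi : i ≤ k - 1) :
    0 ≤ r / q ^ i - p * ((r / p) / q ^ i) ∧
    r / q ^ i - p * ((r / p) / q ^ i) ≤ r / q ^ i ∧
    r / q ^ i < q ^ (k - i) := by
  have hq0 : 0 < q := by omega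
  rw [Int.ediv_sub_mul_ediv_ediv_eq_emod r (by omega) (pow_nonneg hq0.le i)]
  exact ⟨Int.emod_nonneg _ (by omega),
    Int.emod_le_self_of_nonneg (Int.ediv_nonneg hr0 (pow_nonneg hq0.le i)) (by omega),
    Int.ediv_pow_lt_pow_sub hq0 (by omega) hrk⟩

/-- Non-overflow property of REDQ compression: if `0 ≤ r̃ < q^k` then for
`0 ≤ i ≤ k−1` the quantity `u_i = ⌊r̃/q^i⌋ − p·⌊⌊r̃/p⌋/q^i⌋` satisfies
`0 ≤ u_i ≤ ⌊r̃/q^i⌋ < q^{k−i}`, so that it fits in `(k−i)·log₂(q)` bits. -/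
theorem redq_compression_no_overflow (p q : ℤ) (hp : 1 ≤ p) (hq : 2 ≤ q)
    (k : ℕ) (hk : 1 ≤ k) (r : ℤ) (hr0 : 0 ≤ r) (hrk : r < q ^ k)
    (i : ℕ) (hi : i ≤ k - 1) :
    0 ≤ r / q ^ i - p * ((r / p) / q ^ i) ∧
    r / q ^ i - p * ((r / p) / q ^ i) ≤ r / q ^ i ∧
    r / q ^ i < q ^ (k - i) :=
  redq_compression_no_overflow_general p q hp hq k r hr0 hrk i hi
end

section
/- Let β ≥ 2 be an integer, and let r, p, k, u be integers with 0 ≤ r ≤ 2^β − 1, 3 ≤ p ≤ 2^β − 1, r = kp + u and 0 ≤ u < p. Let ε₁, ε₂ be real numbers with |ε₁| ≤ 2^{1−β} and |ε₂| ≤ 2^{1−β}, and set x = (r/p)(1 + ε₁)(1 + ε₂). Then x < k + 2; in particular ⌊x⌋ ≤ k + 1. -/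
/-!
Both rounding factors have absolute value at most `1 + e` with `e = 2 ^ (1 - β) = 2 / 2 ^ β`,
so `x ≤ (r / p) (1 + e) ^ 2` as `r ≥ 0`. For `r ≤ 2 ^ β - 1` the excess `r ((1 + e) ^ 2 - 1)`
is at most `4 - 4 / 4 ^ β < 4`, and `r + 4 ≤ k p + p + 3 ≤ (k + 2) p` once `p ≥ 3`.
-/

theorem one_add_mul_one_add_le_sq {R : Type*} [Field R] [LinearOrder R] [IsStrictOrderedRing R]
    {a b e : R} (ha : |a| ≤ e) (hb : |b| ≤ e) : (1 + a) * (1 + b) ≤ (1 + e) ^ 2 :=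
  calc (1 + a) * (1 + b) ≤ |1 + a| * |1 + b| := (le_abs_self _).trans (abs_mul _ _).le
    _ ≤ (1 + |a|) * (1 + |b|) := by
      gcongr <;> exact (abs_add_le _ _).trans_eq (by rw [abs_one])
    _ ≤ (1 + e) * (1 + e) := by
      have : 0 ≤ 1 + e := by linarith [(abs_nonneg a).trans ha]
      gcongr
    _ = (1 + e) ^ 2 := (sq _).symm

theorem mul_one_add_two_div_sq_lt {R : Type*} [Field R] [LinearOrder R] [IsStrictOrderedRing R]
    {A r : R} (hA : 0 < A) (hr : r ≤ A - 1) : r * (1 + 2 / A) ^ 2 < r + 4 := by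
  have hgrowth : 0 ≤ 4 / A + 4 / A ^ 2 := by positivity
  calc r * (1 + 2 / A) ^ 2 = r + r * (4 / A + 4 / A ^ 2) := by ring
    _ ≤ r + (A - 1) * (4 / A + 4 / A ^ 2) := by gcongr
    _ = r + 4 - 4 / A ^ 2 := by field_simp; ring
    _ < r + 4 := sub_lt_self _ (by positivity)

theorem two_zpow_one_sub_natCast (β : ℕ) : (2 : ℝ) ^ (1 - (β : ℤ)) = 2 / 2 ^ β := by
  rw [zpow_sub₀ two_ne_zero, zpow_one, zpow_natCast]

theorem fdiv_upper_bound_general (β : ℕ) (r p k u : ℤ)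
    (hr0 : 0 ≤ r) (hr1 : r ≤ 2 ^ β - 1)
    (hp0 : 3 ≤ p)
    (hru : r = k * p + u) (hu1 : u < p)
    (ε₁ ε₂ : ℝ) (hε₁ : |ε₁| ≤ 2 ^ (1 - (β : ℤ))) (hε₂ : |ε₂| ≤ 2 ^ (1 - (β : ℤ)))
    (x : ℝ) (hx : x = ((r : ℝ) / (p : ℝ)) * (1 + ε₁) * (1 + ε₂)) :
    x < (k : ℝ) + 2 ∧ ⌊x⌋ ≤ k + 1 := by
  rw [two_zpow_one_sub_natCast] at hε₁ hε₂
  have hp : (0 : ℝ) < p := by exact_mod_cast (by omega : 0 < p)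
  have hrounding : x ≤ r / p * (1 + 2 / 2 ^ β) ^ 2 := by
    rw [hx, mul_assoc]
    exact mul_le_mul_of_nonneg_left (one_add_mul_one_add_le_sq hε₁ hε₂) (by positivity)
  have hnum : (r : ℝ) * (1 + 2 / 2 ^ β) ^ 2 < r + 4 :=
    mul_one_add_two_div_sq_lt (by positivity) (by exact_mod_cast hr1)
  have hquot : (r : ℝ) + 4 ≤ (k + 2) * p := by
    exact_mod_cast (by linarith : r + 4 ≤ (k + 2) * p)
  have hlt : x < k + 2 :=
    calc x ≤ r / p * (1 + 2 / 2 ^ β) ^ 2 := hrounding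
      _ = r * (1 + 2 / 2 ^ β) ^ 2 / p := div_mul_eq_mul_div _ _ _
      _ < k + 2 := (div_lt_iff₀ hp).2 (hnum.trans_le hquot)
  exact ⟨hlt, Int.lt_add_one_iff.1 (Int.floor_lt.2 (by push_cast; linarith))⟩

/-- Floating point division never overshoots by more than one unit: with
`r = kp + u`, `0 ≤ u < p`, `p ≥ 3`, and relative rounding errors
`|ε₁|, |ε₂| ≤ 2^{1−β}`, the computed value `x = (r/p)(1+ε₁)(1+ε₂)` satisfies
`x < k + 2`, hence `⌊x⌋ ≤ k + 1`. -/
theorem fdiv_upper_bound (β : ℕ) (hβ : 2 ≤ β) (r p k u : ℤ)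
    (hr0 : 0 ≤ r) (hr1 : r ≤ 2 ^ β - 1)
    (hp0 : 3 ≤ p) (hp1 : p ≤ 2 ^ β - 1)
    (hru : r = k * p + u) (hu0 : 0 ≤ u) (hu1 : u < p)
    (ε₁ ε₂ : ℝ) (hε₁ : |ε₁| ≤ 2 ^ (1 - (β : ℤ))) (hε₂ : |ε₂| ≤ 2 ^ (1 - (β : ℤ)))
    (x : ℝ) (hx : x = ((r : ℝ) / (p : ℝ)) * (1 + ε₁) * (1 + ε₂)) :
    x < (k : ℝ) + 2 ∧ ⌊x⌋ ≤ k + 1 :=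
  fdiv_upper_bound_general β r p k u hr0 hr1 hp0 hru hu1 ε₁ ε₂ hε₁ hε₂ x hx
end

section
/- Let β ≥ 2 be an integer, and let r, k, u be integers with 0 ≤ r ≤ 2^β − 1, r = 3k + u and 0 ≤ u < 3. Let ε₁, ε₂ be real numbers with |ε₁| ≤ 2^{−β} and |ε₂| ≤ 2^{1−β}, and set x = (r/3)(1 + ε₁)(1 + ε₂). Then x > k − 1; in particular ⌊x⌋ ≥ k − 1. -/
/-!
With `ε = 2^{-β}`, the product `(1 + ε₁)(1 + ε₂)` is at least `(1 - ε)(1 - 2ε)`, so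
`x ≥ r/3 - r ε + (2/3) r ε²`. Since `r < 2^β` we have `r ε ≤ 1 - ε`, hence `x > r/3 - 1 ≥ k - 1`.
-/

lemma one_sub_mul_one_sub_le_one_add_mul_one_add {ε₁ ε₂ δ₁ δ₂ : ℝ} (h₁ : |ε₁| ≤ δ₁)
    (h₂ : |ε₂| ≤ δ₂) (hδ₁ : δ₁ ≤ 1) (hδ₂ : δ₂ ≤ 1) :
    (1 - δ₁) * (1 - δ₂) ≤ (1 + ε₁) * (1 + ε₂) := by
  have hε₁ := (abs_le.mp h₁).1
  have hε₂ := (abs_le.mp h₂).1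
  exact mul_le_mul (by linarith) (by linarith) (by linarith) (by linarith)

lemma sub_one_lt_div_three_mul_one_sub_mul_one_sub {r ε : ℝ} (hr : 0 ≤ r) (hε : 0 < ε)
    (hrε : (r + 1) * ε ≤ 1) :
    r / 3 - 1 < r / 3 * ((1 - ε) * (1 - 2 * ε)) := by
  nlinarith [mul_nonneg (mul_nonneg hr hε.le) hε.le]

lemma add_one_mul_two_zpow_neg_le_one {r : ℝ} {β : ℕ} (hr : r ≤ 2 ^ β - 1) :
    (r + 1) * (2 : ℝ) ^ (-(β : ℤ)) ≤ 1 := by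
  rw [zpow_neg, zpow_natCast, ← div_eq_mul_inv, div_le_one (by positivity)]
  linarith

theorem fdiv_lower_bound_three_general (β : ℕ) (hβ : 2 ≤ β) (r k u : ℤ)
    (hr0 : 0 ≤ r) (hr1 : r ≤ 2 ^ β - 1)
    (hru : r = 3 * k + u) (hu0 : 0 ≤ u)
    (ε₁ ε₂ : ℝ) (hε₁ : |ε₁| ≤ 2 ^ (-(β : ℤ))) (hε₂ : |ε₂| ≤ 2 ^ (1 - (β : ℤ)))
    (x : ℝ) (hx : x = ((r : ℝ) / 3) * (1 + ε₁) * (1 + ε₂)) :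
    (k : ℝ) - 1 < x ∧ k - 1 ≤ ⌊x⌋ := by
  set ε : ℝ := 2 ^ (-(β : ℤ))
  have hε_pos : 0 < ε := by positivity
  have hε_half : 2 * ε ≤ 1 := by
    have : ε ≤ 2 ^ (-1 : ℤ) := zpow_le_zpow_right₀ (by norm_num) (by omega)
    norm_num at this
    linarith
  have hε₂' : |ε₂| ≤ 2 * ε := by
    rwa [sub_eq_add_neg, zpow_add₀ two_ne_zero, zpow_one] at hε₂
  have hr : (r + 1 : ℝ) * ε ≤ 1 := add_one_mul_two_zpow_neg_le_one (by exact_mod_cast hr1)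
  have hk : (k : ℝ) ≤ r / 3 := by
    have : (3 * k : ℝ) ≤ r := by exact_mod_cast (show 3 * k ≤ r by omega)
    linarith
  have hlt : (k : ℝ) - 1 < x := calc
    (k : ℝ) - 1 ≤ r / 3 - 1 := by linarith
    _ < r / 3 * ((1 - ε) * (1 - 2 * ε)) :=
      sub_one_lt_div_three_mul_one_sub_mul_one_sub (by exact_mod_cast hr0) hε_pos hr
    _ ≤ r / 3 * ((1 + ε₁) * (1 + ε₂)) := by
      gcongr ?_ * ?_
      exact one_sub_mul_one_sub_le_one_add_mul_one_add hε₁ hε₂' (by linarith) hε_half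
    _ = x := by rw [hx, mul_assoc]
  exact ⟨hlt, Int.le_floor.mpr (by push_cast; linarith)⟩

/-- Floating point division by `p = 3`: since rounding `1/3` to a `β`-bit
mantissa incurs a relative error of at most `2^{−β}`, with `r = 3k + u`,
`0 ≤ u < 3`, `|ε₁| ≤ 2^{−β}` and `|ε₂| ≤ 2^{1−β}`, the computed value
`x = (r/3)(1+ε₁)(1+ε₂)` satisfies `x > k − 1`, hence `⌊x⌋ ≥ k − 1`. -/
theorem fdiv_lower_bound_three (β : ℕ) (hβ : 2 ≤ β) (r k u : ℤ)
    (hr0 : 0 ≤ r) (hr1 : r ≤ 2 ^ β - 1)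
    (hru : r = 3 * k + u) (hu0 : 0 ≤ u) (hu1 : u < 3)
    (ε₁ ε₂ : ℝ) (hε₁ : |ε₁| ≤ 2 ^ (-(β : ℤ))) (hε₂ : |ε₂| ≤ 2 ^ (1 - (β : ℤ)))
    (x : ℝ) (hx : x = ((r : ℝ) / 3) * (1 + ε₁) * (1 + ε₂)) :
    (k : ℝ) - 1 < x ∧ k - 1 ≤ ⌊x⌋ :=
  fdiv_lower_bound_three_general β hβ r k u hr0 hr1 hru hu0 ε₁ ε₂ hε₁ hε₂ x hx
end

section
/- Let β ≥ 2 be an integer, and let r, p, k, u be integers with 0 ≤ r, 1 ≤ p, r = kp + u and 0 ≤ u < p. Let ε₁, ε₂ be real numbers with 0 ≤ ε₁ ≤ 2^{1−β} and 0 ≤ ε₂ ≤ 2^{1−β}, and set x = (r/p)(1 + ε₁)(1 + ε₂). If r < 2^β/(4 + 2^{2−β}), then k ≤ x < k + 1, and hence ⌊x⌋ = k. -/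
/-! The exact quotient satisfies `k ≤ r/p ≤ k + (p - 1)/p`, so `⌊x⌋ = k` as long as the two upward
roundings inflate `r/p` by less than `1/p`. They multiply it by at most `(1 + 2^{1-β})^2`, i.e. add
at most `(r/p)·(2·2^{1-β} + 2^{2-2β})`, and the bound on `r` says exactly that
`r·(2·2^{1-β} + 2^{2-2β}) < 1`. -/

section Quotient

variable {r p k u : ℤ}

theorem Int.cast_le_div_of_eq_mul_add (hp : 0 < p) (hru : r = k * p + u) (hu : 0 ≤ u) :
    (k : ℝ) ≤ r / p := by
  have hpR : (0 : ℝ) < p := by exact_mod_cast hp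
  rw [le_div_iff₀ hpR]
  exact_mod_cast (by omega : k * p ≤ r)

theorem div_mul_one_add_lt_of_eq_mul_add (hp : 0 < p) (hru : r = k * p + u) (hu : u < p)
    {δ : ℝ} (hδ : (r : ℝ) * δ < 1) : (r / p : ℝ) * (1 + δ) < k + 1 := by
  have hpR : (0 : ℝ) < p := by exact_mod_cast hp
  have hr : (r : ℝ) + 1 ≤ (k + 1) * p := by exact_mod_cast (by linarith : r + 1 ≤ (k + 1) * p)
  rw [div_mul_eq_mul_div, div_lt_iff₀ hpR]
  linarith

end Quotient

theorem one_add_mul_one_add_le_sq_s8 {ε₁ ε₂ E : ℝ} (h₁0 : 0 ≤ 1 + ε₁) (h₂0 : 0 ≤ 1 + ε₂)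
    (h₁ : ε₁ ≤ E) (h₂ : ε₂ ≤ E) : (1 + ε₁) * (1 + ε₂) ≤ (1 + E) ^ 2 := by
  rw [sq]
  exact mul_le_mul (by linarith) (by linarith) h₂0 (by linarith)

theorem two_zpow_mul_sq_one_add_sub_one (β : ℤ) :
    (2 : ℝ) ^ β * ((1 + 2 ^ (1 - β)) ^ 2 - 1) = 4 + 2 ^ (2 - β) := by
  have h2 : (2 : ℝ) ≠ 0 := two_ne_zero
  have hE : (2 : ℝ) ^ β * 2 ^ (1 - β) = 2 := by
    rw [← zpow_add₀ h2]; norm_num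
  have hE2 : (2 : ℝ) ^ β * (2 ^ (1 - β)) ^ 2 = 2 ^ (2 - β) := by
    rw [← zpow_natCast, ← zpow_mul, ← zpow_add₀ h2]; ring_nf
  linear_combination 2 * hE + hE2

theorem mul_sq_one_add_two_zpow_sub_one_lt_one {β : ℤ} {r : ℝ}
    (hr : r < 2 ^ β / (4 + 2 ^ (2 - β))) : r * ((1 + 2 ^ (1 - β)) ^ 2 - 1) < 1 := by
  rw [lt_div_iff₀ (by positivity), ← two_zpow_mul_sq_one_add_sub_one β] at hr
  have h2β : (0 : ℝ) < 2 ^ β := by positivity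
  nlinarith

theorem fdiv_case1_general (β : ℕ) (r p k u : ℤ)
    (hr0 : 0 ≤ r) (hp0 : 1 ≤ p)
    (hru : r = k * p + u) (hu0 : 0 ≤ u) (hu1 : u < p)
    (ε₁ ε₂ : ℝ) (hε₁0 : 0 ≤ ε₁) (hε₁ : ε₁ ≤ 2 ^ (1 - (β : ℤ)))
    (hε₂0 : 0 ≤ ε₂) (hε₂ : ε₂ ≤ 2 ^ (1 - (β : ℤ)))
    (x : ℝ) (hx : x = ((r : ℝ) / (p : ℝ)) * (1 + ε₁) * (1 + ε₂))
    (hr_bound : (r : ℝ) < 2 ^ (β : ℤ) / (4 + 2 ^ (2 - (β : ℤ)))) :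
    (k : ℝ) ≤ x ∧ x < (k : ℝ) + 1 ∧ ⌊x⌋ = k := by
  have hp : 0 < p := by omega
  have hq0 : (0 : ℝ) ≤ r / p := by positivity
  have hq_le_x : (r / p : ℝ) ≤ x := by
    rw [hx, mul_assoc]
    exact le_mul_of_one_le_right hq0 (one_le_mul_of_one_le_of_one_le (by linarith) (by linarith))
  have hx_le : x ≤ (r / p : ℝ) * (1 + ((1 + 2 ^ (1 - (β : ℤ))) ^ 2 - 1)) := by
    rw [hx, mul_assoc, add_sub_cancel]
    exact mul_le_mul_of_nonneg_left
      (one_add_mul_one_add_le_sq_s8 (by linarith) (by linarith) hε₁ hε₂) hq0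
  have hk_le : (k : ℝ) ≤ x := (Int.cast_le_div_of_eq_mul_add hp hru hu0).trans hq_le_x
  have hx_lt : x < k + 1 := hx_le.trans_lt <| div_mul_one_add_lt_of_eq_mul_add hp hru hu1
    (mul_sq_one_add_two_zpow_sub_one_lt_one hr_bound)
  exact ⟨hk_le, hx_lt, Int.floor_eq_iff.2 ⟨hk_le, hx_lt⟩⟩

/-- Case 1 (both operations rounded upward): with `r = kp + u`, `0 ≤ u < p`,
`0 ≤ ε₁, ε₂ ≤ 2^{1−β}`, and `r < 2^β/(4 + 2^{2−β})`, the computed value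
`x = (r/p)(1+ε₁)(1+ε₂)` satisfies `k ≤ x < k + 1`, hence `⌊x⌋ = k`. -/
theorem fdiv_case1 (β : ℕ) (hβ : 2 ≤ β) (r p k u : ℤ)
    (hr0 : 0 ≤ r) (hp0 : 1 ≤ p)
    (hru : r = k * p + u) (hu0 : 0 ≤ u) (hu1 : u < p)
    (ε₁ ε₂ : ℝ) (hε₁0 : 0 ≤ ε₁) (hε₁ : ε₁ ≤ 2 ^ (1 - (β : ℤ)))
    (hε₂0 : 0 ≤ ε₂) (hε₂ : ε₂ ≤ 2 ^ (1 - (β : ℤ)))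
    (x : ℝ) (hx : x = ((r : ℝ) / (p : ℝ)) * (1 + ε₁) * (1 + ε₂))
    (hr_bound : (r : ℝ) < 2 ^ (β : ℤ) / (4 + 2 ^ (2 - (β : ℤ)))) :
    (k : ℝ) ≤ x ∧ x < (k : ℝ) + 1 ∧ ⌊x⌋ = k :=
  fdiv_case1_general β r p k u hr0 hp0 hru hu0 hu1 ε₁ ε₂ hε₁0 hε₁ hε₂0 hε₂ x hx hr_bound
end

section
/- Let β ≥ 2 be an integer, and let r, p, k, u be integers with 0 ≤ r, 1 ≤ p, r = kp + u and 0 ≤ u < p. Let ε₁, ε₂ be real numbers with |ε₁| ≤ 2^{1−β} and |ε₂| ≤ 2^{−β}, and set x = (r/p)(1 + ε₁)(1 + ε₂). If r < 2^β/(3 + 2^{1−β}), then x < k + 1, and hence ⌊x⌋ ≤ k. The same conclusion holds with the roles of the error bounds exchanged, i.e. when |ε₁| ≤ 2^{−β} and |ε₂| ≤ 2^{1−β}. -/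
/-! The two rounding errors multiply to a factor at most `(1 + 2^{1-β})(1 + 2^{-β}) = 1 + δ` with
`δ = (3 + 2^{1-β}) / 2^β`, so `x ≤ (r/p)(1 + δ) = r/p + rδ/p`. The bound on `r` says exactly
`rδ < 1`, while `u ≤ p - 1` gives `r/p ≤ k + 1 - 1/p`; together `x < k + 1`. -/

lemma one_add_mul_one_add_le_of_abs_le {a b A B : ℝ} (ha : |a| ≤ A) (hb : |b| ≤ B) :
    (1 + a) * (1 + b) ≤ (1 + A) * (1 + B) := by
  have hab : a * b ≤ A * B :=
    calc a * b ≤ |a| * |b| := (le_abs_self _).trans (abs_mul a b).le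
      _ ≤ A * B := mul_le_mul ha hb (abs_nonneg _) ((abs_nonneg _).trans ha)
  nlinarith [le_abs_self a, le_abs_self b]

lemma one_add_two_zpow_one_sub_mul (β : ℤ) :
    (1 + (2 : ℝ) ^ (1 - β)) * (1 + 2 ^ (-β)) = 1 + (3 + 2 ^ (1 - β)) / 2 ^ β := by
  have h2 : (2 : ℝ) ^ (1 - β) = 2 * 2 ^ (-β) := by
    rw [sub_eq_add_neg, zpow_add₀ two_ne_zero, zpow_one]
  rw [h2, zpow_neg]
  field_simp
  ring

lemma div_mul_one_add_lt_of_add_one_le {r p k δ : ℝ} (hp : 0 < p) (hδ : r * δ < 1)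
    (hdiv : r + 1 ≤ (k + 1) * p) : r / p * (1 + δ) < k + 1 := by
  rw [div_mul_eq_mul_div, div_lt_iff₀ hp]
  linarith

theorem fdiv_case2_case4_general (β : ℕ) (r p k u : ℤ)
    (hr0 : 0 ≤ r) (hp0 : 1 ≤ p)
    (hru : r = k * p + u) (hu1 : u < p)
    (ε₁ ε₂ : ℝ)
    (hε : (|ε₁| ≤ 2 ^ (1 - (β : ℤ)) ∧ |ε₂| ≤ 2 ^ (-(β : ℤ))) ∨
          (|ε₁| ≤ 2 ^ (-(β : ℤ)) ∧ |ε₂| ≤ 2 ^ (1 - (β : ℤ))))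
    (x : ℝ) (hx : x = ((r : ℝ) / (p : ℝ)) * (1 + ε₁) * (1 + ε₂))
    (hr_bound : (r : ℝ) < 2 ^ (β : ℤ) / (3 + 2 ^ (1 - (β : ℤ)))) :
    x < (k : ℝ) + 1 ∧ ⌊x⌋ ≤ k := by
  have hp : (0 : ℝ) < p := by exact_mod_cast hp0
  have hq : (0 : ℝ) ≤ r / p := div_nonneg (by exact_mod_cast hr0) hp.le
  have herr : (1 + ε₁) * (1 + ε₂) ≤ 1 + (3 + 2 ^ (1 - (β : ℤ))) / 2 ^ (β : ℤ) := by
    rw [← one_add_two_zpow_one_sub_mul]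
    rcases hε with ⟨h₁, h₂⟩ | ⟨h₁, h₂⟩
    · exact one_add_mul_one_add_le_of_abs_le h₁ h₂
    · exact (one_add_mul_one_add_le_of_abs_le h₁ h₂).trans_eq (mul_comm _ _)
  have hrδ : (r : ℝ) * ((3 + 2 ^ (1 - (β : ℤ))) / 2 ^ (β : ℤ)) < 1 := by
    rw [← mul_div_assoc, div_lt_one (by positivity), ← lt_div_iff₀ (by positivity)]
    exact hr_bound
  have hdiv : (r : ℝ) + 1 ≤ (k + 1) * p := by
    exact_mod_cast (show r + 1 ≤ (k + 1) * p by linarith)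
  have hxk : x < k + 1 :=
    calc x ≤ r / p * (1 + (3 + 2 ^ (1 - (β : ℤ))) / 2 ^ (β : ℤ)) := by
          rw [hx, mul_assoc]
          exact mul_le_mul_of_nonneg_left herr hq
      _ < k + 1 := div_mul_one_add_lt_of_add_one_le hp hrδ hdiv
  exact ⟨hxk, Int.lt_add_one_iff.mp (Int.floor_lt.mpr (by exact_mod_cast hxk))⟩

/-- Cases 2 and 4 (one operation rounded to nearest, the other directionally):
with `r = kp + u`, `0 ≤ u < p`, error bounds `|ε₁| ≤ 2^{1−β}, |ε₂| ≤ 2^{−β}`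
(or the roles exchanged), and `r < 2^β/(3 + 2^{1−β})`, the computed value
`x = (r/p)(1+ε₁)(1+ε₂)` satisfies `x < k + 1`, hence `⌊x⌋ ≤ k`. -/
theorem fdiv_case2_case4 (β : ℕ) (hβ : 2 ≤ β) (r p k u : ℤ)
    (hr0 : 0 ≤ r) (hp0 : 1 ≤ p)
    (hru : r = k * p + u) (hu0 : 0 ≤ u) (hu1 : u < p)
    (ε₁ ε₂ : ℝ)
    (hε : (|ε₁| ≤ 2 ^ (1 - (β : ℤ)) ∧ |ε₂| ≤ 2 ^ (-(β : ℤ))) ∨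
          (|ε₁| ≤ 2 ^ (-(β : ℤ)) ∧ |ε₂| ≤ 2 ^ (1 - (β : ℤ))))
    (x : ℝ) (hx : x = ((r : ℝ) / (p : ℝ)) * (1 + ε₁) * (1 + ε₂))
    (hr_bound : (r : ℝ) < 2 ^ (β : ℤ) / (3 + 2 ^ (1 - (β : ℤ)))) :
    x < (k : ℝ) + 1 ∧ ⌊x⌋ ≤ k :=
  fdiv_case2_case4_general β r p k u hr0 hp0 hru hu1 ε₁ ε₂ hε x hx hr_bound
end

section
/- Let β ≥ 2 be an integer, and let r, p, k, u be integers with 0 ≤ r, 1 ≤ p, r = kp + u and 0 ≤ u < p. Let ε₁, ε₂ be real numbers with 0 ≤ ε₁ ≤ 2^{1−β} and −2^{1−β} ≤ ε₂ ≤ 0, and set x = (r/p)(1 + ε₁)(1 + ε₂). If r < 2^{β−1}, then x < k + 1, and hence ⌊x⌋ ≤ k. The same conclusion holds with the signs exchanged, i.e. when −2^{1−β} ≤ ε₁ ≤ 0 and 0 ≤ ε₂ ≤ 2^{1−β}. -/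
/-! Whichever error is positive, `(1 + ε₁)(1 + ε₂) ≤ 1 + 2^{1-β}`, and `r < 2^{β-1}` gives
`r·2^{1-β} < 1`; hence `x ≤ (r + r·2^{1-β})/p < (kp + u + 1)/p ≤ k + 1`. -/

section LinearOrderedField

variable {K : Type*} [Field K] [LinearOrder K] [IsStrictOrderedRing K]

theorem one_add_mul_one_add_le_of_opposite_signs {a b δ : K}
    (h : (0 ≤ a ∧ a ≤ δ ∧ b ≤ 0) ∨ (a ≤ 0 ∧ 0 ≤ b ∧ b ≤ δ)) :
    (1 + a) * (1 + b) ≤ 1 + δ := by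
  rcases h with ⟨ha, haδ, hb⟩ | ⟨ha, hb, hbδ⟩
  · calc (1 + a) * (1 + b) ≤ 1 + a := mul_le_of_le_one_right (by linarith) (by linarith)
      _ ≤ 1 + δ := by linarith
  · calc (1 + a) * (1 + b) ≤ 1 + b := mul_le_of_le_one_left (by linarith) (by linarith)
      _ ≤ 1 + δ := by linarith

theorem intCast_div_mul_one_add_lt_add_one {r p k u : ℤ} {δ : K} (hp : 0 < p)
    (hru : r = k * p + u) (hup : u < p) (hrδ : (r : K) * δ < 1) :
    (r : K) / p * (1 + δ) < k + 1 := by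
  have hpK : (0 : K) < p := by exact_mod_cast hp
  have hrK : (r : K) = k * p + u := by exact_mod_cast hru
  have hupK : (u : K) + 1 ≤ p := by exact_mod_cast hup
  rw [div_mul_eq_mul_div, div_lt_iff₀ hpK]
  calc (r : K) * (1 + δ) = r + r * δ := by ring
    _ < k * p + u + 1 := by linarith
    _ ≤ (k + 1) * p := by linarith

end LinearOrderedField

theorem fdiv_case3_case7_general (β : ℕ) (r p k u : ℤ)
    (hr0 : 0 ≤ r) (hp0 : 1 ≤ p)
    (hru : r = k * p + u) (hu1 : u < p)
    (ε₁ ε₂ : ℝ)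
    (hε : (0 ≤ ε₁ ∧ ε₁ ≤ 2 ^ (1 - (β : ℤ)) ∧ -(2 ^ (1 - (β : ℤ))) ≤ ε₂ ∧ ε₂ ≤ 0) ∨
          (-(2 ^ (1 - (β : ℤ))) ≤ ε₁ ∧ ε₁ ≤ 0 ∧ 0 ≤ ε₂ ∧ ε₂ ≤ 2 ^ (1 - (β : ℤ))))
    (x : ℝ) (hx : x = ((r : ℝ) / (p : ℝ)) * (1 + ε₁) * (1 + ε₂))
    (hr_bound : (r : ℝ) < 2 ^ ((β : ℤ) - 1)) :
    x < (k : ℝ) + 1 ∧ ⌊x⌋ ≤ k := by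
  have hrδ : (r : ℝ) * 2 ^ (1 - (β : ℤ)) < 1 := by
    rw [show 1 - (β : ℤ) = -((β : ℤ) - 1) by ring, zpow_neg, mul_inv_lt_iff₀ (by positivity),
      one_mul]
    exact hr_bound
  set δ : ℝ := 2 ^ (1 - (β : ℤ))
  have hprod : (1 + ε₁) * (1 + ε₂) ≤ 1 + δ :=
    one_add_mul_one_add_le_of_opposite_signs (by tauto)
  have hx_le : x ≤ r / p * (1 + δ) := by
    rw [hx, mul_assoc]
    exact mul_le_mul_of_nonneg_left hprod (by positivity)
  have hxk : x < k + 1 := hx_le.trans_lt (intCast_div_mul_one_add_lt_add_one hp0 hru hu1 hrδ)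
  exact ⟨hxk, Int.floor_le_iff.2 (by exact_mod_cast hxk)⟩

/-- Cases 3 and 7 (one operation rounded upward, the other downward): with
`r = kp + u`, `0 ≤ u < p`, opposite-signed errors of magnitude at most
`2^{1−β}`, and `r < 2^{β−1}`, the computed value `x = (r/p)(1+ε₁)(1+ε₂)`
satisfies `x < k + 1`, hence `⌊x⌋ ≤ k`. -/
theorem fdiv_case3_case7 (β : ℕ) (hβ : 2 ≤ β) (r p k u : ℤ)
    (hr0 : 0 ≤ r) (hp0 : 1 ≤ p)
    (hru : r = k * p + u) (hu0 : 0 ≤ u) (hu1 : u < p)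
    (ε₁ ε₂ : ℝ)
    (hε : (0 ≤ ε₁ ∧ ε₁ ≤ 2 ^ (1 - (β : ℤ)) ∧ -(2 ^ (1 - (β : ℤ))) ≤ ε₂ ∧ ε₂ ≤ 0) ∨
          (-(2 ^ (1 - (β : ℤ))) ≤ ε₁ ∧ ε₁ ≤ 0 ∧ 0 ≤ ε₂ ∧ ε₂ ≤ 2 ^ (1 - (β : ℤ))))
    (x : ℝ) (hx : x = ((r : ℝ) / (p : ℝ)) * (1 + ε₁) * (1 + ε₂))
    (hr_bound : (r : ℝ) < 2 ^ ((β : ℤ) - 1)) :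
    x < (k : ℝ) + 1 ∧ ⌊x⌋ ≤ k :=
  fdiv_case3_case7_general β r p k u hr0 hp0 hru hu1 ε₁ ε₂ hε x hx hr_bound
end

section
/- Let β ≥ 2 be an integer, and let r, p, k, u be integers with 0 ≤ r, 1 ≤ p, r = kp + u and 0 ≤ u < p. Let ε₁, ε₂ be real numbers with |ε₁| ≤ 2^{−β} and |ε₂| ≤ 2^{−β}, and set x = (r/p)(1 + ε₁)(1 + ε₂). If r < 2^{β−1}/(1 + 2^{−1−β}), then x < k + 1, and hence ⌊x⌋ ≤ k. -/
/-! With `e = 2^{-β}`, the rounding errors inflate `r/p` by at most the factor `(1 + e)^2`, and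
the bound on `r` says `r (1 + e/2) < 2^{β-1} = 1/(2e)`, i.e. `r ((1 + e)^2 - 1) < 1`. So
`x ≤ r (1 + e)^2 / p < (r + 1)/p ≤ k + 1`, the last step because `u < p` forces
`r + 1 ≤ (k + 1) p`. -/

lemma one_add_mul_one_add_le_sq_s11 {K : Type*} [Field K] [LinearOrder K] [IsStrictOrderedRing K]
    {ε₁ ε₂ e : K} (h₁ : |ε₁| ≤ e) (h₂ : |ε₂| ≤ e) :
    (1 + ε₁) * (1 + ε₂) ≤ (1 + e) ^ 2 :=
  calc (1 + ε₁) * (1 + ε₂) ≤ |1 + ε₁| * |1 + ε₂| := by rw [← abs_mul]; exact le_abs_self _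
    _ ≤ (1 + |ε₁|) * (1 + |ε₂|) := by
        gcongr <;> exact (abs_add_le _ _).trans_eq (by rw [abs_one])
    _ ≤ (1 + e) ^ 2 := by
        have he : 0 ≤ e := (abs_nonneg _).trans h₁
        rw [sq]; exact mul_le_mul (by linarith) (by linarith) (by positivity) (by linarith)

lemma mul_one_add_sq_lt_add_one {K : Type*} [Field K] [LinearOrder K] [IsStrictOrderedRing K]
    {r e : K} (he : 0 < e) (hr : r < 1 / (2 * e) / (1 + e / 2)) :
    r * (1 + e) ^ 2 < r + 1 := by
  have hr' : r * (1 + e / 2) < 1 / (2 * e) := (lt_div_iff₀ (by positivity)).mp hr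
  have : 2 * e * (r * (1 + e / 2)) < 1 := by
    calc 2 * e * (r * (1 + e / 2)) < 2 * e * (1 / (2 * e)) := by gcongr
      _ = 1 := by field_simp
  linarith

lemma add_one_div_le_add_one {r p k u : ℤ} (hp : 0 < p) (hru : r = k * p + u) (hu : u < p) :
    ((r : ℝ) + 1) / p ≤ k + 1 := by
  have : r + 1 ≤ (k + 1) * p := by linarith
  rw [div_le_iff₀ (by exact_mod_cast hp)]
  exact_mod_cast this

lemma two_zpow_sub_one (n : ℤ) : (2 : ℝ) ^ (n - 1) = 1 / (2 * 2 ^ (-n)) := by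
  rw [zpow_neg, zpow_sub_one₀ two_ne_zero]
  field_simp

lemma two_zpow_neg_one_sub (n : ℤ) : (2 : ℝ) ^ (-1 - n) = 2 ^ (-n) / 2 := by
  rw [sub_eq_add_neg, add_comm, zpow_add₀ two_ne_zero, zpow_neg_one, div_eq_mul_inv]

theorem fdiv_case5_general (β : ℕ) (r p k u : ℤ)
    (hr0 : 0 ≤ r) (hp0 : 1 ≤ p)
    (hru : r = k * p + u) (hu1 : u < p)
    (ε₁ ε₂ : ℝ) (hε₁ : |ε₁| ≤ 2 ^ (-(β : ℤ))) (hε₂ : |ε₂| ≤ 2 ^ (-(β : ℤ)))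
    (x : ℝ) (hx : x = ((r : ℝ) / (p : ℝ)) * (1 + ε₁) * (1 + ε₂))
    (hr_bound : (r : ℝ) < 2 ^ ((β : ℤ) - 1) / (1 + 2 ^ (-1 - (β : ℤ)))) :
    x < (k : ℝ) + 1 ∧ ⌊x⌋ ≤ k := by
  rw [two_zpow_sub_one, two_zpow_neg_one_sub] at hr_bound
  have hp : (0 : ℝ) < p := by exact_mod_cast hp0
  have hxk : x < k + 1 :=
    calc x = r * ((1 + ε₁) * (1 + ε₂)) / p := by rw [hx]; ring
      _ ≤ r * (1 + 2 ^ (-(β : ℤ))) ^ 2 / p := by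
          gcongr; exact one_add_mul_one_add_le_sq_s11 hε₁ hε₂
      _ < (r + 1) / p := by
          gcongr; exact mul_one_add_sq_lt_add_one (by positivity) hr_bound
      _ ≤ k + 1 := add_one_div_le_add_one (by omega) hru hu1
  exact ⟨hxk, Int.floor_le_iff.mpr (by exact_mod_cast hxk)⟩

/-- Case 5 (both operations rounded to nearest): with `r = kp + u`,
`0 ≤ u < p`, `|ε₁|, |ε₂| ≤ 2^{−β}`, and `r < 2^{β−1}/(1 + 2^{−1−β})`, the
computed value `x = (r/p)(1+ε₁)(1+ε₂)` satisfies `x < k + 1`, hence `⌊x⌋ ≤ k`. -/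
theorem fdiv_case5 (β : ℕ) (hβ : 2 ≤ β) (r p k u : ℤ)
    (hr0 : 0 ≤ r) (hp0 : 1 ≤ p)
    (hru : r = k * p + u) (hu0 : 0 ≤ u) (hu1 : u < p)
    (ε₁ ε₂ : ℝ) (hε₁ : |ε₁| ≤ 2 ^ (-(β : ℤ))) (hε₂ : |ε₂| ≤ 2 ^ (-(β : ℤ)))
    (x : ℝ) (hx : x = ((r : ℝ) / (p : ℝ)) * (1 + ε₁) * (1 + ε₂))
    (hr_bound : (r : ℝ) < 2 ^ ((β : ℤ) - 1) / (1 + 2 ^ (-1 - (β : ℤ)))) :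
    x < (k : ℝ) + 1 ∧ ⌊x⌋ ≤ k :=
  fdiv_case5_general β r p k u hr0 hp0 hru hu1 ε₁ ε₂ hε₁ hε₂ x hx hr_bound
end

section
/- Let β ≥ 2 be an integer, and let r, p, k, u be integers with 0 ≤ r ≤ 2^β − 1, 1 ≤ p, r = kp + u and 0 ≤ u < p. Let ε₁, ε₂ be real numbers with |ε₁| ≤ 2^{−β} and −2^{1−β} ≤ ε₂ ≤ 0, and set x = (r/p)(1 + ε₁)(1 + ε₂). Then x < k + 1, and hence ⌊x⌋ ≤ k, with no further restriction on r. -/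
/-!
Rounding the product downward only shrinks it, so it suffices to bound `(r/p)(1 + ε₁)`.
Since `r < 2^β`, the relative error `ε₁ ≤ 2^{-β}` perturbs `r` by less than one unit,
so `r(1 + ε₁) < r + 1 ≤ (k + 1)p`.
-/

lemma mul_zpow_neg_lt_one {r : ℝ} {β : ℕ} (h : r < 2 ^ β) : r * 2 ^ (-(β : ℤ)) < 1 := by
  rw [zpow_neg, zpow_natCast, ← div_eq_mul_inv]
  exact (div_lt_one (by positivity)).mpr h

lemma mul_one_add_lt_add_one {r t ε : ℝ} (hr : 0 ≤ r) (hε : ε ≤ t) (hrt : r * t < 1) :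
    r * (1 + ε) < r + 1 := by
  nlinarith

lemma div_mul_one_add_lt_add_one {β : ℕ} {r p k u : ℤ} {ε : ℝ} (hr0 : 0 ≤ r)
    (hr1 : (r : ℝ) < 2 ^ β) (hp : 0 < p) (hru : r = k * p + u) (hu : u < p)
    (hε : ε ≤ 2 ^ (-(β : ℤ))) : (r : ℝ) / p * (1 + ε) < k + 1 := by
  have hr_succ : ((r + 1 : ℤ) : ℝ) ≤ ((k + 1) * p : ℤ) := by
    exact_mod_cast (show r + 1 ≤ (k + 1) * p by linarith)
  push_cast at hr_succ
  rw [div_mul_eq_mul_div, div_lt_iff₀ (by exact_mod_cast hp)]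
  calc (r : ℝ) * (1 + ε) < r + 1 :=
        mul_one_add_lt_add_one (by exact_mod_cast hr0) hε (mul_zpow_neg_lt_one hr1)
    _ ≤ (k + 1) * p := hr_succ

theorem fdiv_case6_general (β : ℕ) (r p k u : ℤ)
    (hr0 : 0 ≤ r) (hr1 : r ≤ 2 ^ β - 1) (hp0 : 1 ≤ p)
    (hru : r = k * p + u) (hu1 : u < p)
    (ε₁ ε₂ : ℝ) (hε₁ : |ε₁| ≤ 2 ^ (-(β : ℤ)))
    (hε₂1 : ε₂ ≤ 0)
    (x : ℝ) (hx : x = ((r : ℝ) / (p : ℝ)) * (1 + ε₁) * (1 + ε₂)) :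
    x < (k : ℝ) + 1 ∧ ⌊x⌋ ≤ k := by
  obtain ⟨hε₁_lower, hε₁_upper⟩ := abs_le.mp hε₁
  have hr_lt : (r : ℝ) < 2 ^ β := by exact_mod_cast (show r < 2 ^ β by linarith)
  have h_pow_le_one : (2 : ℝ) ^ (-(β : ℤ)) ≤ 1 :=
    zpow_le_one_of_nonpos₀ one_le_two (by omega)
  have h_nearest_nonneg : 0 ≤ (r : ℝ) / p * (1 + ε₁) := by
    have : (0 : ℝ) ≤ r := by exact_mod_cast hr0
    have : (0 : ℝ) < p := by exact_mod_cast hp0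
    exact mul_nonneg (by positivity) (by linarith)
  have hx_lt : x < k + 1 := by
    rw [hx]
    calc (r : ℝ) / p * (1 + ε₁) * (1 + ε₂) ≤ (r : ℝ) / p * (1 + ε₁) :=
          mul_le_of_le_one_right h_nearest_nonneg (by linarith)
      _ < k + 1 := div_mul_one_add_lt_add_one hr0 hr_lt hp0 hru hu1 hε₁_upper
  refine ⟨hx_lt, Int.lt_add_one_iff.mp (Int.floor_lt.mpr ?_)⟩
  exact_mod_cast hx_lt

/-- Case 6 (inverse rounded to nearest, product rounded downward): with
`0 ≤ r ≤ 2^β − 1`, `r = kp + u`, `0 ≤ u < p`, `|ε₁| ≤ 2^{−β}` and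
`−2^{1−β} ≤ ε₂ ≤ 0`, the computed value `x = (r/p)(1+ε₁)(1+ε₂)` satisfies
`x < k + 1`, hence `⌊x⌋ ≤ k`, with no further restriction on `r`. -/
theorem fdiv_case6 (β : ℕ) (hβ : 2 ≤ β) (r p k u : ℤ)
    (hr0 : 0 ≤ r) (hr1 : r ≤ 2 ^ β - 1) (hp0 : 1 ≤ p)
    (hru : r = k * p + u) (hu0 : 0 ≤ u) (hu1 : u < p)
    (ε₁ ε₂ : ℝ) (hε₁ : |ε₁| ≤ 2 ^ (-(β : ℤ)))
    (hε₂0 : -(2 ^ (1 - (β : ℤ))) ≤ ε₂) (hε₂1 : ε₂ ≤ 0)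
    (x : ℝ) (hx : x = ((r : ℝ) / (p : ℝ)) * (1 + ε₁) * (1 + ε₂)) :
    x < (k : ℝ) + 1 ∧ ⌊x⌋ ≤ k :=
  fdiv_case6_general β r p k u hr0 hr1 hp0 hru hu1 ε₁ ε₂ hε₁ hε₂1 x hx
end

section
/- Let r, p, k, u be integers with 0 ≤ r, 1 ≤ p, r = kp + u and 0 ≤ u < p. Let ε₁, ε₂ be real numbers with −1 < ε₁ ≤ 0 and −1 < ε₂ ≤ 0, and set x = (r/p)(1 + ε₁)(1 + ε₂). Then x ≤ k + 1 − 1/p < k + 1, and hence ⌊x⌋ ≤ k, with no restriction on the size of r. -/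
/-! Rounding downward can only shrink a nonnegative quantity, so `x ≤ r / p`; and since `r` is an
integer strictly below `(k + 1) p`, in fact `r ≤ (k + 1) p - 1`, i.e. `r / p ≤ k + 1 - 1 / p`. -/

theorem Int.cast_div_le_add_one_sub_one_div {K : Type*} [Field K] [LinearOrder K]
    [IsStrictOrderedRing K] {r p k : ℤ} (hp : 0 < p) (hr : r < (k + 1) * p) :
    (r : K) / p ≤ k + 1 - 1 / p := by
  have hpK : (0 : K) < p := by exact_mod_cast hp
  have hr' : (r : K) ≤ (k + 1) * p - 1 := by exact_mod_cast Int.le_sub_one_of_lt hr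
  rw [div_le_iff₀ hpK, sub_mul, one_div_mul_cancel hpK.ne']
  exact hr'

theorem fdiv_case9_general (r p k u : ℤ)
    (hr0 : 0 ≤ r) (hp0 : 1 ≤ p)
    (hru : r = k * p + u) (hu1 : u < p)
    (ε₁ ε₂ : ℝ) (hε₁0 : -1 < ε₁) (hε₁1 : ε₁ ≤ 0)
    (hε₂1 : ε₂ ≤ 0)
    (x : ℝ) (hx : x = ((r : ℝ) / (p : ℝ)) * (1 + ε₁) * (1 + ε₂)) :
    x ≤ (k : ℝ) + 1 - 1 / (p : ℝ) ∧ x < (k : ℝ) + 1 ∧ ⌊x⌋ ≤ k := by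
  have hq : (0 : ℝ) ≤ r / p := by positivity
  have hx_le_q : x ≤ r / p := by
    rw [hx]
    calc (r : ℝ) / p * (1 + ε₁) * (1 + ε₂)
        ≤ r / p * (1 + ε₁) := mul_le_of_le_one_right (mul_nonneg hq (by linarith)) (by linarith)
      _ ≤ r / p := mul_le_of_le_one_right hq (by linarith)
  have hx_le : x ≤ (k : ℝ) + 1 - 1 / p :=
    hx_le_q.trans (Int.cast_div_le_add_one_sub_one_div (by omega) (by rw [hru]; linarith))
  have hx_lt : x < (k : ℝ) + 1 := by
    have : (0 : ℝ) < 1 / p := by positivity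
    linarith
  exact ⟨hx_le, hx_lt, Int.floor_le_iff.2 hx_lt⟩

/-- Case 9 (both operations rounded downward): with `r = kp + u`, `0 ≤ u < p`
and `−1 < ε₁, ε₂ ≤ 0`, the computed value `x = (r/p)(1+ε₁)(1+ε₂)` satisfies
`x ≤ k + 1 − 1/p < k + 1`, hence `⌊x⌋ ≤ k`, with no restriction on `r`. -/
theorem fdiv_case9 (r p k u : ℤ)
    (hr0 : 0 ≤ r) (hp0 : 1 ≤ p)
    (hru : r = k * p + u) (hu0 : 0 ≤ u) (hu1 : u < p)
    (ε₁ ε₂ : ℝ) (hε₁0 : -1 < ε₁) (hε₁1 : ε₁ ≤ 0)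
    (hε₂0 : -1 < ε₂) (hε₂1 : ε₂ ≤ 0)
    (x : ℝ) (hx : x = ((r : ℝ) / (p : ℝ)) * (1 + ε₁) * (1 + ε₂)) :
    x ≤ (k : ℝ) + 1 - 1 / (p : ℝ) ∧ x < (k : ℝ) + 1 ∧ ⌊x⌋ ≤ k :=
  fdiv_case9_general r p k u hr0 hp0 hru hu1 ε₁ ε₂ hε₁0 hε₁1 hε₂1 x hx
end

section
/- Let β ≥ 1 be an integer, and let r, p, k, u be integers with 1 ≤ p ≤ 2^β − 1, 0 ≤ r ≤ 2^β − 1, r = kp + u and 0 ≤ u < p. Then 1/p > (k + 1)·2^{−β−1}, and consequently k + 1 − 1/p < (k + 1)(1 − 2^{−β−1}). -/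
/-! Since `u ≥ 0`, `(k + 1)·p = r − u + p ≤ r + p ≤ 2^{β+1} − 2 < 2^{β+1}`; dividing by `p·2^{β+1}`
gives the first inequality, and the second is a rearrangement of the first. -/

theorem Int.succ_mul_lt_two_pow_succ_of_eq_mul_add {β : ℕ} {r p k u : ℤ}
    (hp : p ≤ 2 ^ β - 1) (hr : r ≤ 2 ^ β - 1) (hru : r = k * p + u) (hu : 0 ≤ u) :
    (k + 1) * p < 2 ^ (β + 1) := by
  rw [pow_succ]
  linarith

theorem mul_two_zpow_neg_succ_lt_one_div {K : Type*} [Field K] [LinearOrder K] [IsStrictOrderedRing K]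
    {β : ℕ} {a p : K} (hp : 0 < p) (h : a * p < 2 ^ (β + 1)) :
    a * 2 ^ (-(β : ℤ) - 1) < 1 / p := by
  rw [show -(β : ℤ) - 1 = -((β + 1 : ℕ) : ℤ) by push_cast; ring, zpow_neg, zpow_natCast,
    ← div_eq_mul_inv, div_lt_div_iff₀ (by positivity) hp, one_mul]
  exact h

theorem fdiv_case8_core_general (β : ℕ) (r p k u : ℤ)
    (hp0 : 1 ≤ p) (hp1 : p ≤ 2 ^ β - 1)
    (hr1 : r ≤ 2 ^ β - 1)
    (hru : r = k * p + u) (hu0 : 0 ≤ u) :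
    (k + 1 : ℝ) * 2 ^ (-(β : ℤ) - 1) < 1 / (p : ℝ) ∧
    (k : ℝ) + 1 - 1 / (p : ℝ) < ((k : ℝ) + 1) * (1 - 2 ^ (-(β : ℤ) - 1)) := by
  have hprod : ((k + 1) * p : ℝ) < 2 ^ (β + 1) := by
    exact_mod_cast Int.succ_mul_lt_two_pow_succ_of_eq_mul_add hp1 hr1 hru hu0
  have hp : (0 : ℝ) < p := by exact_mod_cast hp0
  have hlt := mul_two_zpow_neg_succ_lt_one_div hp hprod
  exact ⟨hlt, by linarith⟩

/-- Arithmetic core of Case 8: if `1 ≤ p ≤ 2^β − 1`, `0 ≤ r ≤ 2^β − 1` and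
`r = kp + u` with `0 ≤ u < p`, then `1/p > (k + 1)·2^{−β−1}` and consequently
`k + 1 − 1/p < (k + 1)(1 − 2^{−β−1})`. -/
theorem fdiv_case8_core (β : ℕ) (hβ : 1 ≤ β) (r p k u : ℤ)
    (hp0 : 1 ≤ p) (hp1 : p ≤ 2 ^ β - 1)
    (hr0 : 0 ≤ r) (hr1 : r ≤ 2 ^ β - 1)
    (hru : r = k * p + u) (hu0 : 0 ≤ u) (hu1 : u < p) :
    (k + 1 : ℝ) * 2 ^ (-(β : ℤ) - 1) < 1 / (p : ℝ) ∧
    (k : ℝ) + 1 - 1 / (p : ℝ) < ((k : ℝ) + 1) * (1 - 2 ^ (-(β : ℤ) - 1)) :=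
  fdiv_case8_core_general β r p k u hp0 hp1 hr1 hru hu0
end

section
/- Let p be a prime, let q and k ≥ 2 be integers, and let μ_0, …, μ_{2k−2} and u_0, …, u_{2k−2} be integers such that u_i ≡ Σ_{j=i}^{2k−2} μ_j q^{j−i} (mod p) for every 0 ≤ i ≤ 2k−2. Then, as polynomials over ℤ/pℤ, Σ_{i=0}^{2k−2} μ_i X^i = L + H, where L = Σ_{i=0}^{k−2} (u_i − q·u_{i+1}) X^i and H = u_{2k−2} X^{2k−2} + Σ_{i=k−1}^{2k−3} (u_i − q·u_{i+1}) X^i (all coefficients taken modulo p). -/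
/-!
Write `t_i = Σ_{j=i}^{n} μ_j q^{j-i}` for the Horner tails of `μ`. They satisfy `t_n = μ_n` and
`t_i = μ_i + q t_{i+1}`, so modulo `p` every coefficient `μ_i` with `i < n` is recovered as
`u_i - q u_{i+1}` and the top one as `u_n`. Splitting the resulting sum at `k - 1` gives `L + H`.
-/

open Finset Polynomial

section HornerTail

variable {R : Type*} [CommRing R]

def hornerTail (μ : ℕ → R) (q : R) (i n : ℕ) : R :=
  ∑ j ∈ Icc i n, μ j * q ^ (j - i)

theorem hornerTail_self (μ : ℕ → R) (q : R) (n : ℕ) : hornerTail μ q n n = μ n := by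
  simp [hornerTail]

theorem hornerTail_of_lt (μ : ℕ → R) (q : R) {i n : ℕ} (h : i < n) :
    hornerTail μ q i n = μ i + q * hornerTail μ q (i + 1) n := by
  rw [hornerTail, ← insert_Icc_add_one_left_eq_Icc h.le, sum_insert (by simp), hornerTail,
    mul_sum, Nat.sub_self, pow_zero, mul_one]
  congr 1
  refine sum_congr rfl fun j hj => ?_
  rw [show j - i = j - (i + 1) + 1 by grind, pow_succ]
  ring

theorem eq_sub_mul_of_eq_hornerTail {μ u : ℕ → R} {q : R} {i n : ℕ} (h : i < n)
    (hi : u i = hornerTail μ q i n) (hi' : u (i + 1) = hornerTail μ q (i + 1) n) :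
    μ i = u i - q * u (i + 1) := by
  rw [hi, hi', hornerTail_of_lt μ q h]
  ring

theorem sum_C_mul_X_pow_eq_of_eq_hornerTail {μ u : ℕ → R} {q : R} {n : ℕ}
    (hu : ∀ i ≤ n, u i = hornerTail μ q i n) :
    ∑ i ∈ range (n + 1), C (μ i) * X ^ i =
      ∑ i ∈ range n, C (u i - q * u (i + 1)) * X ^ i + C (u n) * X ^ n := by
  rw [sum_range_succ, hu n le_rfl, hornerTail_self]
  congr 1
  refine sum_congr rfl fun i hi => ?_
  have hin : i < n := mem_range.1 hi
  rw [eq_sub_mul_of_eq_hornerTail hin (hu i hin.le) (hu (i + 1) hin)]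

end HornerTail

theorem fgdp_split_correct_general (p : ℕ) (q : ℤ) (k : ℕ) (hk : 2 ≤ k)
    (μ u : ℕ → ℤ)
    (hu : ∀ i ≤ 2 * k - 2,
      u i ≡ ∑ j ∈ Icc i (2 * k - 2), μ j * q ^ (j - i) [ZMOD (p : ℤ)]) :
    (∑ i ∈ range (2 * k - 1), C ((μ i : ZMod p)) * X ^ i) =
      (∑ i ∈ range (k - 1), C (((u i - q * u (i + 1) : ℤ) : ZMod p)) * X ^ i) +
      (C ((u (2 * k - 2) : ZMod p)) * X ^ (2 * k - 2) +
        ∑ i ∈ Icc (k - 1) (2 * k - 3),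
          C (((u i - q * u (i + 1) : ℤ) : ZMod p)) * X ^ i) := by
  have hu' : ∀ i ≤ 2 * k - 2, (u i : ZMod p) =
      hornerTail (fun j => (μ j : ZMod p)) (q : ZMod p) i (2 * k - 2) := fun i hi => by
    rw [(ZMod.intCast_eq_intCast_iff _ _ _).2 (hu i hi), hornerTail]
    push_cast
    rfl
  have hsplit : range (2 * k - 2) = range (k - 1) ∪ Icc (k - 1) (2 * k - 3) := by
    ext i; simp only [mem_union, mem_range, mem_Icc]; omega
  have hdisj : Disjoint (range (k - 1)) (Icc (k - 1) (2 * k - 3)) :=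
    disjoint_left.2 fun i h h' => by simp only [mem_range, mem_Icc] at h h'; omega
  rw [show 2 * k - 1 = 2 * k - 2 + 1 by omega, sum_C_mul_X_pow_eq_of_eq_hornerTail hu', hsplit,
    sum_union hdisj]
  push_cast
  ring

open Finset Polynomial in
/-- Correctness of the fast Galois field dot product splitting: if
`u_i ≡ Σ_{j=i}^{2k−2} μ_j q^{j−i} (mod p)` for all `0 ≤ i ≤ 2k−2`, then over
`ℤ/pℤ` the polynomial `Σ_{i=0}^{2k−2} μ_i X^i` equals `L + H` where
`L = Σ_{i=0}^{k−2} (u_i − q·u_{i+1}) X^i` and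
`H = u_{2k−2} X^{2k−2} + Σ_{i=k−1}^{2k−3} (u_i − q·u_{i+1}) X^i`. -/
theorem fgdp_split_correct (p : ℕ) (hp : p.Prime) (q : ℤ) (k : ℕ) (hk : 2 ≤ k)
    (μ u : ℕ → ℤ)
    (hu : ∀ i ≤ 2 * k - 2,
      u i ≡ ∑ j ∈ Icc i (2 * k - 2), μ j * q ^ (j - i) [ZMOD (p : ℤ)]) :
    (∑ i ∈ range (2 * k - 1), C ((μ i : ZMod p)) * X ^ i) =
      (∑ i ∈ range (k - 1), C (((u i - q * u (i + 1) : ℤ) : ZMod p)) * X ^ i) +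
      (C ((u (2 * k - 2) : ZMod p)) * X ^ (2 * k - 2) +
        ∑ i ∈ Icc (k - 1) (2 * k - 3),
          C (((u i - q * u (i + 1) : ℤ) : ZMod p)) * X ^ i) :=
  fgdp_split_correct_general p q k hk μ u hu
end

section
/- Let p ≥ 2, d ≥ 0, m ≥ 1 and Q be integers, set k = m(d+1), and assume k(p−1)² < Q. For 0 ≤ i ≤ d and 0 ≤ l ≤ m−1 let a_{i,l} and b_{i,l} be integers with 0 ≤ a_{i,l} ≤ p−1 and 0 ≤ b_{i,l} ≤ p−1. Define ã_l = Σ_{i=0}^{d} a_{i,l} Q^{d−i} (compression with decreasing powers) and b̃_l = Σ_{i=0}^{d} b_{i,l} Q^i (compression with increasing powers), and let S = Σ_{l=0}^{m−1} ã_l · b̃_l. Then ⌊S/Q^d⌋ mod Q = Σ_{l=0}^{m−1} Σ_{i=0}^{d} a_{i,l} b_{i,l}, i.e. the coefficient of Q^d in the base-Q expansion of S is exactly the full dot product of length k; moreover S < Q^{2d+1}. -/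
/-! The packed sum `S` is the value at `Q` of `P = ∑ₗ Aₗ Bₗ`, where `Aₗ` has the coefficients
`a_{d,l}, …, a_{0,l}` and `Bₗ` the coefficients `b_{0,l}, …, b_{d,l}`, so the coefficient of `X^d`
in `Aₗ Bₗ` is the `l`-th dot product. Every coefficient of `P` is a sum of at most `m(d+1) = k`
products bounded by `(p-1)²`, hence `< Q`; the coefficients of `P` are therefore exactly the
base-`Q` digits of `P(Q)`. -/

open Finset Polynomial

namespace Polynomial

section Digits

variable {Q : ℕ} {P : ℕ[X]}

theorem eval_nat_eq_eval_divX_mul_add : P.eval Q = P.divX.eval Q * Q + P.coeff 0 := by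
  conv_lhs => rw [← divX_mul_X_add P]
  simp

theorem eval_nat_div_pow_mod (hP : ∀ e, P.coeff e < Q) (t : ℕ) :
    P.eval Q / Q ^ t % Q = P.coeff t := by
  induction t generalizing P with
  | zero =>
    rw [pow_zero, Nat.div_one, eval_nat_eq_eval_divX_mul_add, Nat.mul_add_mod_of_lt (hP 0)]
  | succ t ih =>
    have hdiv : P.eval Q / Q = P.divX.eval Q := by
      rw [eval_nat_eq_eval_divX_mul_add, mul_comm, Nat.mul_add_div (Nat.zero_lt_of_lt (hP 0)),
        Nat.div_eq_of_lt (hP 0), add_zero]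
    rw [pow_succ', ← Nat.div_div_eq_div_mul, hdiv, ih fun e => coeff_divX (p := P) ▸ hP _,
      coeff_divX]

theorem sum_range_mul_pow_lt_pow {c : ℕ → ℕ} (hc : ∀ e, c e < Q) (n : ℕ) :
    ∑ e ∈ range n, c e * Q ^ e < Q ^ n := by
  induction n with
  | zero => simp
  | succ n ih =>
    calc ∑ e ∈ range (n + 1), c e * Q ^ e
        < Q ^ n + c n * Q ^ n := by rw [sum_range_succ]; exact Nat.add_lt_add_right ih _
      _ = (c n + 1) * Q ^ n := by ring
      _ ≤ Q ^ (n + 1) := by rw [pow_succ']; exact Nat.mul_le_mul_right _ (hc n)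

theorem eval_nat_lt_pow (hP : ∀ e, P.coeff e < Q) {n : ℕ} (hn : P.natDegree < n) :
    P.eval Q < Q ^ n := by
  rw [eval_eq_sum_range' hn]
  exact sum_range_mul_pow_lt_pow hP n

end Digits

noncomputable def ofCoeffs {R : Type*} [Semiring R] (n : ℕ) (u : ℕ → R) : R[X] :=
  ∑ i ∈ range n, monomial i (u i)

section OfCoeffs

variable {R : Type*} [Semiring R] {n : ℕ} {u v : ℕ → R}

theorem coeff_ofCoeffs (e : ℕ) : (ofCoeffs n u).coeff e = if e < n then u e else 0 := by
  simp [ofCoeffs, coeff_monomial]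

theorem eval_ofCoeffs (x : R) : (ofCoeffs n u).eval x = ∑ i ∈ range n, u i * x ^ i := by
  simp [ofCoeffs, eval_finsetSum]

theorem eval_ofCoeffs_rev (x : R) :
    (ofCoeffs (n + 1) fun i => u (n - i)).eval x = ∑ i ∈ range (n + 1), u i * x ^ (n - i) := by
  rw [eval_ofCoeffs, ← sum_range_reflect]
  refine sum_congr rfl fun i hi => ?_
  rw [Nat.add_sub_cancel, Nat.sub_sub_self (Nat.lt_succ_iff.mp (mem_range.mp hi))]

theorem natDegree_ofCoeffs_le : (ofCoeffs (n + 1) u).natDegree ≤ n :=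
  natDegree_sum_le_of_forall_le _ _ fun _ hi =>
    (natDegree_monomial_le _).trans (Nat.lt_succ_iff.mp (mem_range.mp hi))

theorem coeff_ofCoeffs_mul_ofCoeffs {e : ℕ} (he : e < n) :
    (ofCoeffs n u * ofCoeffs n v).coeff e = ∑ i ∈ range (e + 1), u (e - i) * v i := by
  rw [coeff_mul, Nat.sum_antidiagonal_eq_sum_range_succ_mk, ← sum_range_reflect]
  refine sum_congr rfl fun i hi => ?_
  have hi : i ≤ e := Nat.lt_succ_iff.mp (mem_range.mp hi)
  rw [coeff_ofCoeffs, coeff_ofCoeffs, Nat.succ_sub_one, Nat.sub_sub_self hi,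
    if_pos (by omega), if_pos (by omega)]

theorem coeff_ofCoeffs_rev_mul_ofCoeffs :
    ((ofCoeffs (n + 1) fun i => u (n - i)) * ofCoeffs (n + 1) v).coeff n =
      ∑ i ∈ range (n + 1), u i * v i := by
  rw [coeff_ofCoeffs_mul_ofCoeffs (Nat.lt_succ_self n)]
  exact sum_congr rfl fun i hi => by
    rw [Nat.sub_sub_self (Nat.lt_succ_iff.mp (mem_range.mp hi))]

end OfCoeffs

section NatBounds

variable {n : ℕ} {w : ℕ → ℕ} {β : ℕ}

theorem coeff_ofCoeffs_le (hw : ∀ j < n, w j ≤ β) (e : ℕ) : (ofCoeffs n w).coeff e ≤ β := by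
  rw [coeff_ofCoeffs]
  split_ifs with he
  · exact hw e he
  · exact Nat.zero_le β

theorem coeff_mul_ofCoeffs_le {f : ℕ[X]} {α : ℕ} (hf : ∀ x, f.coeff x ≤ α)
    (hw : ∀ j < n, w j ≤ β) (e : ℕ) : (f * ofCoeffs n w).coeff e ≤ n * (α * β) := by
  rw [ofCoeffs, mul_sum, finsetSum_coeff]
  refine (sum_le_sum fun j hj => ?_).trans_eq (by rw [sum_const, card_range, smul_eq_mul])
  rw [← C_mul_X_pow_eq_monomial, ← mul_assoc, coeff_mul_X_pow', coeff_mul_C]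
  split_ifs
  · exact Nat.mul_le_mul (hf _) (hw j (mem_range.mp hj))
  · exact Nat.zero_le _

end NatBounds

end Polynomial

open Finset in
theorem cmm_middle_product_general (p d m Q : ℕ)
    (k : ℕ) (hk : k = m * (d + 1)) (hQ : k * (p - 1) ^ 2 < Q)
    (a b : ℕ → ℕ → ℕ)
    (ha : ∀ i ≤ d, ∀ l < m, a i l ≤ p - 1)
    (hb : ∀ i ≤ d, ∀ l < m, b i l ≤ p - 1)
    (S : ℕ)
    (hS : S = ∑ l ∈ range m,
      (∑ i ∈ range (d + 1), a i l * Q ^ (d - i)) *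
        (∑ i ∈ range (d + 1), b i l * Q ^ i)) :
    S / Q ^ d % Q = ∑ l ∈ range m, ∑ i ∈ range (d + 1), a i l * b i l ∧
    S < Q ^ (2 * d + 1) := by
  set P : ℕ[X] := ∑ l ∈ range m,
    (ofCoeffs (d + 1) fun i => a (d - i) l) * ofCoeffs (d + 1) fun i => b i l
  have hSP : S = P.eval Q := by
    rw [hS, eval_finsetSum]
    exact sum_congr rfl fun l _ => by
      rw [eval_mul, eval_ofCoeffs_rev (u := (a · l)), eval_ofCoeffs]
  have hcoeff : ∀ e, P.coeff e < Q := fun e => calc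
    P.coeff e ≤ ∑ _l ∈ range m, (d + 1) * ((p - 1) * (p - 1)) := by
      rw [finsetSum_coeff]
      refine sum_le_sum fun l hl => coeff_mul_ofCoeffs_le
        (coeff_ofCoeffs_le fun i _ => ha _ (Nat.sub_le d i) l (mem_range.mp hl))
        (fun i hi => hb i (Nat.lt_succ_iff.mp hi) l (mem_range.mp hl)) e
    _ = k * (p - 1) ^ 2 := by rw [sum_const, card_range, smul_eq_mul, hk]; ring
    _ < Q := hQ
  have hmid : P.coeff d = ∑ l ∈ range m, ∑ i ∈ range (d + 1), a i l * b i l := by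
    rw [finsetSum_coeff]
    exact sum_congr rfl fun l _ => coeff_ofCoeffs_rev_mul_ofCoeffs (u := (a · l))
  have hdeg : P.natDegree < 2 * d + 1 :=
    Nat.lt_succ_of_le <| natDegree_sum_le_of_forall_le _ _ fun _ _ =>
      natDegree_mul_le.trans (two_mul d ▸ add_le_add natDegree_ofCoeffs_le natDegree_ofCoeffs_le)
  rw [hSP, eval_nat_div_pow_mod hcoeff, hmid]
  exact ⟨rfl, eval_nat_lt_pow hcoeff hdeg⟩

open Finset in
/-- Middle product recovery for Compressed Matrix Multiplication: packing the
left operands with decreasing powers of `Q` and the right operands with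
increasing powers, and assuming `k(p−1)² < Q` with `k = m(d+1)`, the
coefficient of `Q^d` in the base-`Q` expansion of `S = Σ_l ã_l b̃_l` is exactly
the full dot product of length `k`; moreover `S < Q^{2d+1}`. -/
theorem cmm_middle_product (p d m Q : ℕ) (hp : 2 ≤ p) (hm : 1 ≤ m)
    (k : ℕ) (hk : k = m * (d + 1)) (hQ : k * (p - 1) ^ 2 < Q)
    (a b : ℕ → ℕ → ℕ)
    (ha : ∀ i ≤ d, ∀ l < m, a i l ≤ p - 1)
    (hb : ∀ i ≤ d, ∀ l < m, b i l ≤ p - 1)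
    (S : ℕ)
    (hS : S = ∑ l ∈ range m,
      (∑ i ∈ range (d + 1), a i l * Q ^ (d - i)) *
        (∑ i ∈ range (d + 1), b i l * Q ^ i)) :
    S / Q ^ d % Q = ∑ l ∈ range m, ∑ i ∈ range (d + 1), a i l * b i l ∧
    S < Q ^ (2 * d + 1) :=
  cmm_middle_product_general p d m Q k hk hQ a b ha hb S hS
end

section
/- Let Q ≥ 2, d_q ≥ 0, d_θ ≥ 0, p ≥ 2 and m ≥ 1 be integers with m(p−1)² < Q, and set Θ = Q^{d_q+1}. For 0 ≤ i ≤ d_q, 0 ≤ j ≤ d_θ and 0 ≤ l ≤ m−1 let a_{i,l} and b_{l,j} be integers with 0 ≤ a_{i,l} ≤ p−1 and 0 ≤ b_{l,j} ≤ p−1, and define S = Σ_{l=0}^{m−1} (Σ_{i=0}^{d_q} a_{i,l} Q^i)(Σ_{j=0}^{d_θ} b_{l,j} Θ^j). Then S = Σ_{i=0}^{d_q} Σ_{j=0}^{d_θ} c_{i,j} Q^{i + (d_q+1)j} with c_{i,j} = Σ_{l=0}^{m−1} a_{i,l} b_{l,j} and 0 ≤ c_{i,j} < Q for all i, j, and consequently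 c_{i,j} = ⌊S/Q^{i + (d_q+1)j}⌋ mod Q for all i, j. -/
/-!
Substituting `Θ = Q^(d_q+1)` turns `S` into `Σ_{i,j} c_{i,j} Q^(i + (d_q+1)j)`, and the exponents
`i + (d_q+1)j` run bijectively over `0, …, (d_q+1)(d_θ+1) - 1`. So `S` is an ordinary base-`Q`
expansion once every coefficient is a digit, which `c_{i,j} ≤ m(p-1)² < Q` guarantees; digits of
such an expansion are read off by `⌊S / Q^k⌋ mod Q`.
-/

open Finset

theorem Nat.sum_range_mul_pow_div_pow_mod_s17 {b n t : ℕ} {d : ℕ → ℕ} (hd : ∀ k < n, d k < b)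
    (ht : t < n) : (∑ k ∈ range n, d k * b ^ k) / b ^ t % b = d t := by
  induction n generalizing d t with
  | zero => omega
  | succ n ih =>
    have hd₀ : d 0 < b := hd 0 n.succ_pos
    have hshift : ∑ k ∈ range (n + 1), d k * b ^ k
        = b * ∑ k ∈ range n, d (k + 1) * b ^ k + d 0 := by
      rw [sum_range_succ', mul_sum, pow_zero, mul_one]
      exact congrArg (· + d 0) (sum_congr rfl fun k _ => by ring)
    rw [hshift]
    cases t with
    | zero => simp [Nat.mod_eq_of_lt hd₀]
    | succ t =>
      rw [pow_succ', ← Nat.div_div_eq_div_mul, Nat.mul_add_div (Nat.zero_lt_of_lt hd₀),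
        Nat.div_eq_of_lt hd₀, add_zero]
      exact ih (fun k hk => hd (k + 1) (by omega)) (by omega)

theorem Finset.sum_range_sum_range_add_mul {M : Type*} [AddCommMonoid M] (A B : ℕ) (f : ℕ → M) :
    ∑ j ∈ range B, ∑ i ∈ range A, f (i + A * j) = ∑ k ∈ range (B * A), f k := by
  rw [← Fin.sum_univ_eq_sum_range f, ← finProdFinEquiv.sum_comp, Fintype.sum_prod_type,
    ← Fin.sum_univ_eq_sum_range]
  refine sum_congr rfl fun j _ => ?_
  simp only [finProdFinEquiv_apply_val]
  exact (Fin.sum_univ_eq_sum_range (fun i => f (i + A * j)) A).symm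

theorem sum_mul_sum_pow_pow_eq {R ι : Type*} [CommSemiring R] (s : Finset ι) (A B : ℕ)
    (a : ℕ → ι → R) (b : ι → ℕ → R) (x : R) :
    ∑ l ∈ s, (∑ i ∈ range A, a i l * x ^ i) * (∑ j ∈ range B, b l j * (x ^ A) ^ j)
      = ∑ i ∈ range A, ∑ j ∈ range B, (∑ l ∈ s, a i l * b l j) * x ^ (i + A * j) := by
  simp_rw [sum_mul_sum, sum_mul]
  rw [sum_comm]
  refine sum_congr rfl fun i _ => ?_
  rw [sum_comm]
  refine sum_congr rfl fun j _ => sum_congr rfl fun l _ => ?_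
  ring

theorem sum_range_mul_le {m r : ℕ} {f g : ℕ → ℕ} (hf : ∀ l < m, f l ≤ r) (hg : ∀ l < m, g l ≤ r) :
    ∑ l ∈ range m, f l * g l ≤ m * r ^ 2 := by
  calc ∑ l ∈ range m, f l * g l ≤ ∑ _l ∈ range m, r * r :=
        sum_le_sum fun l hl => Nat.mul_le_mul (hf l (mem_range.mp hl)) (hg l (mem_range.mp hl))
    _ = m * r ^ 2 := by rw [sum_const, card_range, smul_eq_mul, sq]

open Finset in
theorem full_compression_correct_general (Q dq dθ p m : ℕ) (hQ : m * (p - 1) ^ 2 < Q)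
    (Θ : ℕ) (hΘ : Θ = Q ^ (dq + 1))
    (a b : ℕ → ℕ → ℕ)
    (ha : ∀ i ≤ dq, ∀ l < m, a i l ≤ p - 1)
    (hb : ∀ l < m, ∀ j ≤ dθ, b l j ≤ p - 1)
    (S : ℕ)
    (hS : S = ∑ l ∈ range m,
      (∑ i ∈ range (dq + 1), a i l * Q ^ i) *
        (∑ j ∈ range (dθ + 1), b l j * Θ ^ j))
    (c : ℕ → ℕ → ℕ)
    (hc : ∀ i j, c i j = ∑ l ∈ range m, a i l * b l j) :
    S = ∑ i ∈ range (dq + 1), ∑ j ∈ range (dθ + 1),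
          c i j * Q ^ (i + (dq + 1) * j) ∧
    (∀ i ≤ dq, ∀ j ≤ dθ, c i j < Q) ∧
    (∀ i ≤ dq, ∀ j ≤ dθ, c i j = S / Q ^ (i + (dq + 1) * j) % Q) := by
  have hcQ : ∀ i ≤ dq, ∀ j ≤ dθ, c i j < Q := fun i hi j hj =>
    (hc i j).symm ▸ (sum_range_mul_le (ha i hi) (fun l hl => hb l hl j hj)).trans_lt hQ
  have hSc : S = ∑ i ∈ range (dq + 1), ∑ j ∈ range (dθ + 1), c i j * Q ^ (i + (dq + 1) * j) := by
    simp only [hS, hΘ, sum_mul_sum_pow_pow_eq, hc]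
  refine ⟨hSc, hcQ, fun i hi j hj => ?_⟩
  set d : ℕ → ℕ := fun k => c (k % (dq + 1)) (k / (dq + 1))
  have hd : ∀ i ≤ dq, ∀ j, d (i + (dq + 1) * j) = c i j := fun i hi j => by
    simp only [d, Nat.add_mul_mod_self_left, Nat.add_mul_div_left _ _ dq.succ_pos,
      Nat.mod_eq_of_lt (Nat.lt_succ_of_le hi), Nat.div_eq_of_lt (Nat.lt_succ_of_le hi), zero_add]
  have hSd : S = ∑ k ∈ range ((dθ + 1) * (dq + 1)), d k * Q ^ k := by
    rw [hSc, sum_comm, ← sum_range_sum_range_add_mul]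
    exact sum_congr rfl fun j _ => sum_congr rfl fun i hi => by
      rw [hd i (Nat.le_of_lt_succ (mem_range.mp hi)) j]
  have hdQ : ∀ k < (dθ + 1) * (dq + 1), d k < Q := fun k hk =>
    hcQ _ (Nat.le_of_lt_succ (Nat.mod_lt k dq.succ_pos)) _
      (Nat.le_of_lt_succ (Nat.div_lt_of_lt_mul (by rwa [mul_comm] at hk)))
  rw [hSd, Nat.sum_range_mul_pow_div_pow_mod_s17 hdQ (by nlinarith), hd i hi j]

open Finset in
/-- Full compression via bivariate Kronecker substitution: with
`Θ = Q^{d_q+1}` and `m(p−1)² < Q`, the single integer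
`S = Σ_l (Σ_i a_{i,l} Q^i)(Σ_j b_{l,j} Θ^j)` has base-`Q` digits
`c_{i,j} = Σ_l a_{i,l} b_{l,j} < Q` at positions `i + (d_q+1)j`, each inner
product being recovered independently. -/
theorem full_compression_correct (Q dq dθ p m : ℕ) (hQ2 : 2 ≤ Q) (hp : 2 ≤ p)
    (hm : 1 ≤ m) (hQ : m * (p - 1) ^ 2 < Q)
    (Θ : ℕ) (hΘ : Θ = Q ^ (dq + 1))
    (a b : ℕ → ℕ → ℕ)
    (ha : ∀ i ≤ dq, ∀ l < m, a i l ≤ p - 1)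
    (hb : ∀ l < m, ∀ j ≤ dθ, b l j ≤ p - 1)
    (S : ℕ)
    (hS : S = ∑ l ∈ range m,
      (∑ i ∈ range (dq + 1), a i l * Q ^ i) *
        (∑ j ∈ range (dθ + 1), b l j * Θ ^ j))
    (c : ℕ → ℕ → ℕ)
    (hc : ∀ i j, c i j = ∑ l ∈ range m, a i l * b l j) :
    S = ∑ i ∈ range (dq + 1), ∑ j ∈ range (dθ + 1),
          c i j * Q ^ (i + (dq + 1) * j) ∧
    (∀ i ≤ dq, ∀ j ≤ dθ, c i j < Q) ∧
    (∀ i ≤ dq, ∀ j ≤ dθ, c i j = S / Q ^ (i + (dq + 1) * j) % Q) :=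
  full_compression_correct_general Q dq dθ p m hQ Θ hΘ a b ha hb S hS c hc
end
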